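/- arXiv:1809.03231 — 12 statements merged into one kernel-verified Lean document; each statement's English description precedes it below -/
import Mathlib

section
/- Let 0 < α, 0 < β, ω_A ≥ 0, ω_D ≥ 0, and N a positive integer. If (p_1,...,p_N) ∈ [0,1]^N satisfies the stationary mean-field equations p_n(1 - p_{n+1} + ω_D) = (p_{n-1} + ω_A)(1 - p_n) for n = 1,...,N with boundary values p_0 = α and p_{N+1} = 1 - β, then 0 < p_n < 1 for all n = 1,...,N. -/
/-- In a physically meaningful stationary mean-field solution of the TASEP-LK,
local densities can never be 0 or 1. -/
theorem tasep_lk_stationary_strict_bounds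
    (N : ℕ) (hN : 0 < N) (α β ωA ωD : ℝ)
    (hα : 0 < α) (hβ : 0 < β) (hωA : 0 ≤ ωA) (hωD : 0 ≤ ωD)
    (p : ℕ → ℝ)
    (hp0 : p 0 = α) (hpN : p (N + 1) = 1 - β)
    (hmem : ∀ n, 1 ≤ n → n ≤ N → p n ∈ Set.Icc (0 : ℝ) 1)
    (heq : ∀ n, 1 ≤ n → n ≤ N →
      p n * (1 - p (n + 1) + ωD) = (p (n - 1) + ωA) * (1 - p n)) :
    ∀ n, 1 ≤ n → n ≤ N → 0 < p n ∧ p n < 1 := by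
  -- Positivity by forward induction
  have pos : ∀ n, 1 ≤ n → n ≤ N → 0 < p n := by
    intro n hn
    induction n, hn using Nat.le_induction with
    | base =>
      intro hnN
      rcases lt_or_eq_of_le (hmem 1 le_rfl hnN).1 with h | h
      · exact h
      · exfalso
        have h1 := heq 1 le_rfl hnN
        simp only [Nat.sub_self, hp0] at h1
        rw [← h] at h1
        have hle := (hmem 1 le_rfl hnN).2
        nlinarith
    | succ m hm ih =>
      intro hnN
      have hmN : m ≤ N := le_trans (Nat.le_succ m) hnN
      have hpm := ih hmN
      rcases lt_or_eq_of_le (hmem (m + 1) (by omega) hnN).1 with h | h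
      · exact h
      · exfalso
        have h1 := heq (m + 1) (by omega) hnN
        simp only [Nat.add_sub_cancel] at h1
        rw [← h] at h1
        nlinarith
  -- Upper bound by backward induction via distance to N
  have ub : ∀ d n, 1 ≤ n → n ≤ N → N - n = d → p n < 1 := by
    intro d
    induction d with
    | zero =>
      intro n hn hnN hd
      have hnN' : n = N := by omega
      subst hnN'
      rcases lt_or_eq_of_le (hmem n hn le_rfl).2 with h | h
      · exact h
      · exfalso
        have h1 := heq n hn le_rfl
        rw [h, hpN] at h1
        by_cases hn1 : n = 1
        · rw [hn1] at h1; simp [hp0] at h1; nlinarith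
        · have h0' := (hmem (n - 1) (by omega) (by omega)).1
          nlinarith
    | succ d ih =>
      intro n hn hnN hd
      have hlt : n < N := by omega
      have hnext : p (n + 1) < 1 := ih (n + 1) (by omega) (by omega) (by omega)
      rcases lt_or_eq_of_le (hmem n hn hnN).2 with h | h
      · exact h
      · exfalso
        have h1 := heq n hn hnN
        rw [h] at h1
        by_cases hn1 : n = 1
        · rw [hn1] at h1 hnext; simp [hp0] at h1; nlinarith
        · have h0 := (hmem (n - 1) (by omega) (by omega)).1
          nlinarith
  intro n hn hnN
  exact ⟨pos n hn hnN, ub (N - n) n hn hnN rfl⟩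
end

section
/- Let 0 < α, 0 < β, ω_A ≥ 0, ω_D ≥ 0, N a positive integer. If (p_1,...,p_N) and (q_1,...,q_N) are both N-tuples in [0,1]^N satisfying p_n(1 - p_{n+1} + ω_D) = (p_{n-1} + ω_A)(1 - p_n) for n = 1,...,N with p_0 = α, p_{N+1} = 1 - β (and the same for q), then p_n = q_n for all n. -/
/-- Positivity of a stationary mean-field profile. -/
lemma tasep_lk_pos
    (N : ℕ) (α ωA ωD : ℝ)
    (hα : 0 < α) (hωA : 0 ≤ ωA)
    (p : ℕ → ℝ)
    (hp0 : p 0 = α)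
    (hpmem : ∀ n, 1 ≤ n → n ≤ N → p n ∈ Set.Icc (0 : ℝ) 1)
    (hpeq : ∀ n, 1 ≤ n → n ≤ N →
      p n * (1 - p (n + 1) + ωD) = (p (n - 1) + ωA) * (1 - p n)) :
    ∀ n, 1 ≤ n → n ≤ N → 0 < p n := by
  intro n
  induction n with
  | zero => omega
  | succ k ih =>
    intro _ hkN
    have hprev : 0 < p k := by
      rcases Nat.eq_zero_or_pos k with hk0 | hk1
      · subst hk0; rw [hp0]; exact hα
      · exact ih hk1 (by omega)
    have hE := hpeq (k + 1) (by omega) hkN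
    simp only [Nat.add_sub_cancel] at hE
    have h0 : 0 ≤ p (k + 1) := (hpmem (k + 1) (by omega) hkN).1
    by_contra hc
    push_neg at hc
    have hz : p (k + 1) = 0 := le_antisymm (by linarith) h0
    rw [hz] at hE
    nlinarith [hE, hprev, hωA]

/-- Key comparison lemma: two stationary profiles cannot satisfy `q 1 < p 1`. -/
lemma tasep_lk_key
    (N : ℕ) (hN : 0 < N) (α β ωA ωD : ℝ)
    (hα : 0 < α) (hβ : 0 < β) (hωA : 0 ≤ ωA) (hωD : 0 ≤ ωD)
    (p q : ℕ → ℝ)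
    (hp0 : p 0 = α) (hpN : p (N + 1) = 1 - β)
    (hpeq : ∀ n, 1 ≤ n → n ≤ N →
      p n * (1 - p (n + 1) + ωD) = (p (n - 1) + ωA) * (1 - p n))
    (hq0 : q 0 = α) (hqN : q (N + 1) = 1 - β)
    (hqmem : ∀ n, 1 ≤ n → n ≤ N → q n ∈ Set.Icc (0 : ℝ) 1)
    (hqeq : ∀ n, 1 ≤ n → n ≤ N →
      q n * (1 - q (n + 1) + ωD) = (q (n - 1) + ωA) * (1 - q n))
    (h1 : q 1 < p 1) : False := by
  have inv : ∀ n, 1 ≤ n → n ≤ N →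
      q n < p n ∧ p n * (1 - p (n + 1)) < q n * (1 - q (n + 1)) := by
    intro n
    induction n with
    | zero => omega
    | succ k ih =>
      intro _ hkN
      rcases Nat.eq_zero_or_pos k with hk0 | hk1
      · subst hk0
        refine ⟨h1, ?_⟩
        have hEp := hpeq 1 le_rfl (by omega)
        have hEq := hqeq 1 le_rfl (by omega)
        norm_num at hEp hEq
        rw [hp0] at hEp
        rw [hq0] at hEq
        nlinarith [hEp, hEq, mul_pos (show (0:ℝ) < α + ωA + ωD by linarith)
          (show (0:ℝ) < p 1 - q 1 by linarith)]
      · obtain ⟨hlt, hJ⟩ := ih hk1 (by omega)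
        have hq1k : q (k + 1) ≤ 1 := (hqmem (k + 1) (by omega) hkN).2
        have hq0k : 0 ≤ q k := (hqmem k hk1 (by omega)).1
        have hpk : 0 < p k := lt_of_le_of_lt hq0k hlt
        have hlt' : q (k + 1) < p (k + 1) := by
          nlinarith [hJ, mul_nonneg (sub_nonneg.2 hlt.le) (sub_nonneg.2 hq1k), hpk]
        refine ⟨hlt', ?_⟩
        have hEp := hpeq (k + 1) (by omega) hkN
        have hEq := hqeq (k + 1) (by omega) hkN
        simp only [Nat.add_sub_cancel] at hEp hEq
        nlinarith [hEp, hEq, hJ,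
          mul_nonneg hωA (sub_nonneg.2 hlt'.le),
          mul_nonneg hωD (sub_nonneg.2 hlt'.le)]
  obtain ⟨hlt, hJ⟩ := inv N (by omega) le_rfl
  rw [hpN, hqN] at hJ
  nlinarith [hJ, mul_pos hβ (sub_pos.2 hlt)]

/-- Uniqueness of the stationary mean-field solution of the TASEP-LK. -/
theorem tasep_lk_stationary_unique
    (N : ℕ) (hN : 0 < N) (α β ωA ωD : ℝ)
    (hα : 0 < α) (hβ : 0 < β) (hωA : 0 ≤ ωA) (hωD : 0 ≤ ωD)
    (p q : ℕ → ℝ)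
    (hp0 : p 0 = α) (hpN : p (N + 1) = 1 - β)
    (hpmem : ∀ n, 1 ≤ n → n ≤ N → p n ∈ Set.Icc (0 : ℝ) 1)
    (hpeq : ∀ n, 1 ≤ n → n ≤ N →
      p n * (1 - p (n + 1) + ωD) = (p (n - 1) + ωA) * (1 - p n))
    (hq0 : q 0 = α) (hqN : q (N + 1) = 1 - β)
    (hqmem : ∀ n, 1 ≤ n → n ≤ N → q n ∈ Set.Icc (0 : ℝ) 1)
    (hqeq : ∀ n, 1 ≤ n → n ≤ N →
      q n * (1 - q (n + 1) + ωD) = (q (n - 1) + ωA) * (1 - q n)) :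
    ∀ n, 1 ≤ n → n ≤ N → p n = q n := by
  have hppos := tasep_lk_pos N α ωA ωD hα hωA p hp0 hpmem hpeq
  have h1 : p 1 = q 1 := by
    by_contra h
    rcases Ne.lt_or_gt h with h' | h'
    · exact tasep_lk_key N hN α β ωA ωD hα hβ hωA hωD q p hq0 hqN hqeq
        hp0 hpN hpmem hpeq h'
    · exact tasep_lk_key N hN α β ωA ωD hα hβ hωA hωD p q hp0 hpN hpeq
        hq0 hqN hqmem hqeq h'
  have S : ∀ n, n ≤ N → p n = q n ∧ p (n + 1) = q (n + 1) := by
    intro n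
    induction n with
    | zero => intro _; exact ⟨by rw [hp0, hq0], h1⟩
    | succ k ih =>
      intro hk
      obtain ⟨e0, e1⟩ := ih (by omega)
      refine ⟨e1, ?_⟩
      have hEp := hpeq (k + 1) (by omega) hk
      have hEq := hqeq (k + 1) (by omega) hk
      simp only [Nat.add_sub_cancel] at hEp hEq
      rw [← e0, ← e1] at hEq
      have hpos : 0 < p (k + 1) := hppos (k + 1) (by omega) hk
      have := hEp.trans hEq.symm
      have h2 := mul_left_cancel₀ hpos.ne' this
      linarith
  intro n h1' h2'
  exact (S n h2').1
end

section
/- Let 0 < α, 0 < β, ω_A ≥ 0, ω_D ≥ 0 with ω_A + ω_D > 0, and N a positive integer. Then there exists (p_1,...,p_N) ∈ [0,1]^N satisfying p_n(1 - p_{n+1} + ω_D) = (p_{n-1} + ω_A)(1 - p_n) for n = 1,...,N, with p_0 = α and p_{N+1} = 1 - β. -/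
/-- Extension of a configuration on `Fin N` to `ℕ` with boundary values. -/
noncomputable def tlkExt (N : ℕ) (α β : ℝ) (q : Fin N → ℝ) : ℕ → ℝ :=
  fun n => if h : 1 ≤ n ∧ n ≤ N then q ⟨n - 1, by omega⟩ else if n = 0 then α else 1 - β

lemma tlk_frac_mono (t1 t2 s1 s2 ωA ωD : ℝ) (ht0 : 0 ≤ t1 + ωA) (ht : t1 ≤ t2)
    (hs : s1 ≤ s2) (hb2 : 0 ≤ 1 - s2 + ωD)
    (h1 : 0 < t1 + ωA + (1 - s1) + ωD) (h2 : 0 < t2 + ωA + (1 - s2) + ωD) :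
    (t1 + ωA) / (t1 + ωA + (1 - s1) + ωD) ≤ (t2 + ωA) / (t2 + ωA + (1 - s2) + ωD) := by
  rw [div_le_div_iff₀ h1 h2]
  nlinarith [mul_le_mul (by linarith : t1 + ωA ≤ t2 + ωA)
    (by linarith : 1 - s2 + ωD ≤ 1 - s1 + ωD) hb2 (by linarith : (0:ℝ) ≤ t2 + ωA)]

/-- Existence of a stationary mean-field solution of the TASEP-LK when
ω_A + ω_D > 0. -/
theorem tasep_lk_stationary_exists
    (N : ℕ) (hN : 0 < N) (α β ωA ωD : ℝ)
    (hα : 0 < α) (hβ : 0 < β) (hωA : 0 ≤ ωA) (hωD : 0 ≤ ωD)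
    (hω : 0 < ωA + ωD) :
    ∃ p : ℕ → ℝ, p 0 = α ∧ p (N + 1) = 1 - β ∧
      ∀ n, 1 ≤ n → n ≤ N → p n ∈ Set.Icc (0 : ℝ) 1 ∧
        p n * (1 - p (n + 1) + ωD) = (p (n - 1) + ωA) * (1 - p n) := by
  haveI : Fact ((0:ℝ) ≤ 1) := ⟨zero_le_one⟩
  -- bounds on the extension
  have hA : ∀ (q : Fin N → ℝ), (∀ j, (0:ℝ) ≤ q j) → ∀ m, m ≤ N → 0 ≤ tlkExt N α β q m := by
    intro q hq m hm
    unfold tlkExt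
    split
    · exact hq _
    · split
      · exact hα.le
      · omega
  have hB : ∀ (q : Fin N → ℝ), (∀ j, q j ≤ (1:ℝ)) → ∀ m, 1 ≤ m →
      (0 ≤ 1 - tlkExt N α β q m + ωD ∧ 0 < 1 - tlkExt N α β q m + ωD + ωA) := by
    intro q hq m hm
    unfold tlkExt
    split
    · constructor
      · have := hq (⟨m - 1, by omega⟩ : Fin N); linarith
      · have := hq (⟨m - 1, by omega⟩ : Fin N); linarith
    · rw [if_neg (by omega)]
      constructor <;> linarith
  -- monotonicity of the extension
  have hmono : ∀ (q r : Fin N → ℝ), (∀ j, q j ≤ r j) → ∀ m,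
      tlkExt N α β q m ≤ tlkExt N α β r m := by
    intro q r hqr m
    unfold tlkExt
    split
    · exact hqr _
    · exact le_refl _
  -- the fixed point map on the cube
  set S := (Fin N → Set.Icc (0:ℝ) 1) with hS
  have key : ∀ (x : S) (i : Fin N),
      letI q : Fin N → ℝ := fun j => (x j : ℝ)
      letI a := tlkExt N α β q i.val + ωA
      letI d := tlkExt N α β q i.val + ωA + (1 - tlkExt N α β q (i.val + 2)) + ωD
      0 ≤ a ∧ 0 < d ∧ a ≤ d := by
    intro x i
    set q : Fin N → ℝ := fun j => (x j : ℝ) with hq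
    have hq0 : ∀ j, (0:ℝ) ≤ q j := fun j => (x j).2.1
    have hq1 : ∀ j, q j ≤ (1:ℝ) := fun j => (x j).2.2
    have h1 : 0 ≤ tlkExt N α β q i.val := hA q hq0 i.val (by omega)
    have h2 := hB q hq1 (i.val + 2) (by omega)
    refine ⟨by linarith, by linarith, by linarith⟩
  let f : S →o S :=
    { toFun := fun x i =>
        ⟨(tlkExt N α β (fun j => (x j : ℝ)) i.val + ωA) /
          (tlkExt N α β (fun j => (x j : ℝ)) i.val + ωA +
            (1 - tlkExt N α β (fun j => (x j : ℝ)) (i.val + 2)) + ωD), by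
          obtain ⟨h0, hd, hle⟩ := key x i
          constructor
          · exact div_nonneg h0 hd.le
          · exact div_le_one_of_le₀ hle hd.le⟩
      monotone' := by
        intro x y hxy i
        obtain ⟨hx0, hxd, _⟩ := key x i
        obtain ⟨hy0, hyd, _⟩ := key y i
        show _ ≤ _
        simp only [Subtype.mk_le_mk]
        have hm1 : tlkExt N α β (fun j => (x j : ℝ)) i.val ≤
            tlkExt N α β (fun j => (y j : ℝ)) i.val :=
          hmono _ _ (fun j => hxy j) _
        have hm2 : tlkExt N α β (fun j => (x j : ℝ)) (i.val + 2) ≤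
            tlkExt N α β (fun j => (y j : ℝ)) (i.val + 2) :=
          hmono _ _ (fun j => hxy j) _
        have hx1 : (fun j => ((x j : ℝ))) = fun j => (x j : ℝ) := rfl
        have hqy1 : ∀ j, ((y j : ℝ)) ≤ 1 := fun j => (y j).2.2
        have hb2 := (hB (fun j => (y j : ℝ)) hqy1 (i.val + 2) (by omega)).1
        exact tlk_frac_mono _ _ _ _ _ _ (by linarith) hm1 hm2 (by linarith)
          hxd hyd }
  -- Knaster-Tarski fixed point
  set x : S := OrderHom.lfp f with hx
  have hfix : f x = x := OrderHom.map_lfp f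
  set q : Fin N → ℝ := fun j => (x j : ℝ) with hqdef
  refine ⟨tlkExt N α β q, ?_, ?_, ?_⟩
  · unfold tlkExt; simp
  · unfold tlkExt
    rw [dif_neg (by omega), if_neg (by omega)]
  · intro n hn1 hnN
    have hi : (⟨n - 1, by omega⟩ : Fin N).val = n - 1 := rfl
    have hpn : tlkExt N α β q n = q ⟨n - 1, by omega⟩ := by
      unfold tlkExt; rw [dif_pos ⟨hn1, hnN⟩]
    have hfx : (x ⟨n - 1, by omega⟩ : ℝ) = (f x ⟨n - 1, by omega⟩ : ℝ) := by
      rw [hfix]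
    have hval : q ⟨n - 1, by omega⟩ =
        (tlkExt N α β q (n - 1) + ωA) /
          (tlkExt N α β q (n - 1) + ωA + (1 - tlkExt N α β q (n - 1 + 2)) + ωD) := by
      rw [hqdef]
      simp only
      rw [hfx]
      rfl
    obtain ⟨h0, hd, hle⟩ := key x (⟨n - 1, by omega⟩ : Fin N)
    simp only [hi] at h0 hd hle
    have hidx : n - 1 + 2 = n + 1 := by omega
    try rw [hidx] at hval
    try rw [hidx] at hd
    try rw [hidx] at h0
    try rw [hidx] at hle
    constructor
    · rw [hpn]; exact (x ⟨n - 1, by omega⟩).2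
    · rw [hpn, hval]
      have hne : tlkExt N α β q (n - 1) + ωA + (1 - tlkExt N α β q (n + 1)) + ωD ≠ 0 :=
        ne_of_gt hd
      field_simp
      ring_nf
end

section
/- Let 1/2 < q₀ < 1, α > 1 - q₀, γ = (1 - q₀)/q₀, and let s_n be defined by s_n = q₀ + (2q₀ - 1)·[(1 - γⁿ·(α - q₀)/(α - (1 - q₀)))^{-1} - 1]. If α ≥ q₀ then the sequence (s_n) is non-increasing; if α ≤ q₀ then (s_n) is non-decreasing. -/
/-- Monotonicity of the explicit Riccati sequence: non-increasing if α ≥ q₀,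
non-decreasing if α ≤ q₀. -/
theorem riccati_explicit_monotone
    (q₀ α γ : ℝ) (hq1 : 1 / 2 < q₀) (hq2 : q₀ < 1) (hα : 1 - q₀ < α)
    (hγ : γ = (1 - q₀) / q₀) (s : ℕ → ℝ)
    (hs : ∀ n, s n = q₀ + (2 * q₀ - 1) *
      ((1 - γ ^ n * (α - q₀) / (α - (1 - q₀)))⁻¹ - 1)) :
    (q₀ ≤ α → ∀ n, s (n + 1) ≤ s n) ∧ (α ≤ q₀ → ∀ n, s n ≤ s (n + 1)) := by
  have hd : 0 < α - (1 - q₀) := by linarith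
  have hq0 : 0 < q₀ := by linarith
  have hγ0 : 0 < γ := by rw [hγ]; exact div_pos (by linarith) hq0
  have hγ1 : γ < 1 := by rw [hγ, div_lt_one hq0]; linarith
  have h2 : 0 < 2 * q₀ - 1 := by linarith
  set r : ℝ := (α - q₀) / (α - (1 - q₀)) with hrdef
  have hre : ∀ k : ℕ, γ ^ k * (α - q₀) / (α - (1 - q₀)) = γ ^ k * r := fun k =>
    mul_div_assoc _ _ _
  have hpow : ∀ n : ℕ, γ ^ (n + 1) ≤ γ ^ n := fun n =>
    pow_le_pow_of_le_one hγ0.le hγ1.le (Nat.le_succ n)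
  have hpow1 : ∀ n : ℕ, γ ^ n ≤ 1 := fun n => pow_le_one₀ hγ0.le hγ1.le
  constructor
  · intro hqa n
    rw [hs, hs, hre, hre]
    have hr0 : 0 ≤ r := div_nonneg (by linarith) hd.le
    have hr1 : r < 1 := by rw [hrdef, div_lt_one hd]; linarith
    have h1 : γ ^ n * r < 1 :=
      lt_of_le_of_lt (mul_le_of_le_one_left hr0 (hpow1 n)) hr1
    have h3 : γ ^ (n + 1) * r ≤ γ ^ n * r :=
      mul_le_mul_of_nonneg_right (hpow n) hr0
    have hinv : (1 - γ ^ (n + 1) * r)⁻¹ ≤ (1 - γ ^ n * r)⁻¹ :=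
      inv_anti₀ (by linarith) (by linarith)
    nlinarith [mul_le_mul_of_nonneg_left hinv h2.le]
  · intro hqa n
    rw [hs, hs, hre, hre]
    have hr0 : r ≤ 0 := div_nonpos_of_nonpos_of_nonneg (by linarith) hd.le
    have h1 : γ ^ n * r ≤ 0 := mul_nonpos_of_nonneg_of_nonpos (pow_nonneg hγ0.le n) hr0
    have h3 : γ ^ n * r ≤ γ ^ (n + 1) * r :=
      mul_le_mul_of_nonpos_right (hpow n) hr0
    have h4 : γ ^ (n + 1) * r ≤ 0 :=
      mul_nonpos_of_nonneg_of_nonpos (pow_nonneg hγ0.le _) hr0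
    have hinv : (1 - γ ^ n * r)⁻¹ ≤ (1 - γ ^ (n + 1) * r)⁻¹ :=
      inv_anti₀ (by linarith) (by linarith)
    nlinarith [mul_le_mul_of_nonneg_left hinv h2.le]
end

section
/- Let (r_n)_{n=0}^{N+1} be real numbers with 0 < r_n + ωn < 1 for 1 ≤ n ≤ N, satisfying r_n(1 - r_{n+1}) - r_{n-1}(1 - r_n) = ωn(r_{n+1} - r_{n-1}) for n = 1,...,N, with r_0 = α > 0 and r_{N+1} = q₀ where q₀ > 1/2. If α ≥ q₀, then α ≥ r_n ≥ r_{n+1} ≥ q₀ for n = 1,...,N-1; if α ≤ q₀, then α ≤ r_n ≤ r_{n+1} ≤ q₀ for n = 1,...,N-1. -/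
/-- Monotonicity of the detrended densities of the mean-field TASEP-LK
stationary profile in the high-density phase. -/
theorem detrended_densities_monotone
    (N : ℕ) (hN : 0 < N) (ω α q₀ : ℝ)
    (hω : 0 ≤ ω) (hα : 0 < α) (hq : 1 / 2 < q₀)
    (r : ℕ → ℝ) (hr0 : r 0 = α) (hrN : r (N + 1) = q₀)
    (hbound : ∀ n, 1 ≤ n → n ≤ N → 0 < r n + ω * n ∧ r n + ω * n < 1)
    (heq : ∀ n, 1 ≤ n → n ≤ N →
      r n * (1 - r (n + 1)) - r (n - 1) * (1 - r n)
        = ω * n * (r (n + 1) - r (n - 1))) :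
    (q₀ ≤ α → ∀ n, 1 ≤ n → n ≤ N - 1 →
      r n ≤ α ∧ r (n + 1) ≤ r n ∧ q₀ ≤ r (n + 1)) ∧
    (α ≤ q₀ → ∀ n, 1 ≤ n → n ≤ N - 1 →
      α ≤ r n ∧ r n ≤ r (n + 1) ∧ r (n + 1) ≤ q₀) := by
  -- Step identity: (r(k+1) - r k)(1 - p) = p (r(k+2) - r(k+1)) with p = r(k+1)+ω(k+1)
  have hstep : ∀ k, k + 1 ≤ N →
      (r (k+1) - r k) * (1 - (r (k+1) + ω * ((k:ℝ)+1)))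
        = (r (k+1) + ω * ((k:ℝ)+1)) * (r (k+1+1) - r (k+1)) := by
    intro k hk
    have h := heq (k+1) (by omega) hk
    simp only [Nat.add_sub_cancel] at h
    push_cast at h
    linear_combination h
  have hbnd : ∀ k, k + 1 ≤ N →
      0 < r (k+1) + ω * ((k:ℝ)+1) ∧ r (k+1) + ω * ((k:ℝ)+1) < 1 := by
    intro k hk
    have h := hbound (k+1) (by omega) hk
    push_cast at h
    exact h
  -- sign propagation of consecutive differences
  have hsign : ∀ k, k ≤ N →
      ((r 1 - r 0 ≤ 0 → r (k+1) - r k ≤ 0) ∧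
       (0 ≤ r 1 - r 0 → 0 ≤ r (k+1) - r k) ∧
       (0 < r 1 - r 0 → 0 < r (k+1) - r k) ∧
       (r 1 - r 0 < 0 → r (k+1) - r k < 0)) := by
    intro k
    induction k with
    | zero => exact fun _ => ⟨id, id, id, id⟩
    | succ k ih =>
      intro hk
      obtain ⟨h1, h2, h3, h4⟩ := ih (by omega)
      have hs := hstep k hk
      have hb := hbnd k hk
      refine ⟨fun hd => ?_, fun hd => ?_, fun hd => ?_, fun hd => ?_⟩
      · nlinarith [h1 hd, hb.1, hb.2, hs]
      · nlinarith [h2 hd, hb.1, hb.2, hs]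
      · nlinarith [h3 hd, hb.1, hb.2, hs]
      · nlinarith [h4 hd, hb.1, hb.2, hs]
  -- chains
  have chain_le : (∀ k, k ≤ N → r (k+1) ≤ r k) →
      ∀ i j, i ≤ j → j ≤ N+1 → r j ≤ r i := by
    intro hf i j hij hjN
    induction j with
    | zero => have h0 : i = 0 := by omega
              subst h0; exact le_refl _
    | succ j ih =>
      rcases Nat.lt_or_ge i (j+1) with h | h
      · exact le_trans (hf j (by omega)) (ih (by omega) (by omega))
      · have h0 : i = j + 1 := by omega
        subst h0; exact le_refl _
  have chain_ge : (∀ k, k ≤ N → r k ≤ r (k+1)) →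
      ∀ i j, i ≤ j → j ≤ N+1 → r i ≤ r j := by
    intro hf i j hij hjN
    induction j with
    | zero => have h0 : i = 0 := by omega
              subst h0; exact le_refl _
    | succ j ih =>
      rcases Nat.lt_or_ge i (j+1) with h | h
      · exact le_trans (ih (by omega) (by omega)) (hf j (by omega))
      · have h0 : i = j + 1 := by omega
        subst h0; exact le_refl _
  -- strict increase / decrease from d0
  have hstrict_inc : 0 < r 1 - r 0 → ∀ j, j ≤ N → r 0 < r (j+1) := by
    intro hd j
    induction j with
    | zero => intro _; linarith
    | succ j ih =>
      intro hj
      have h3 := ((hsign (j+1) hj).2.2.1) hd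
      have := ih (by omega)
      linarith
  have hstrict_dec : r 1 - r 0 < 0 → ∀ j, j ≤ N → r (j+1) < r 0 := by
    intro hd j
    induction j with
    | zero => intro _; linarith
    | succ j ih =>
      intro hj
      have h4 := ((hsign (j+1) hj).2.2.2) hd
      have := ih (by omega)
      linarith
  constructor
  · -- q₀ ≤ α : decreasing
    intro hqα n hn1 hn2
    have hdec : ∀ k, k ≤ N → r (k+1) ≤ r k := by
      rcases le_or_gt (r 1 - r 0) 0 with hd | hd
      · intro k hk
        have := ((hsign k hk).1) hd
        linarith
      · exfalso
        have := hstrict_inc hd N le_rfl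
        rw [hr0, hrN] at this
        linarith
    refine ⟨?_, hdec n (by omega), ?_⟩
    · have := chain_le hdec 0 n (by omega) (by omega)
      rwa [hr0] at this
    · have := chain_le hdec (n+1) (N+1) (by omega) le_rfl
      rwa [hrN] at this
  · -- α ≤ q₀ : increasing
    intro hαq n hn1 hn2
    have hinc : ∀ k, k ≤ N → r k ≤ r (k+1) := by
      rcases le_or_gt 0 (r 1 - r 0) with hd | hd
      · intro k hk
        have := ((hsign k hk).2.1) hd
        linarith
      · exfalso
        have := hstrict_dec hd N le_rfl
        rw [hr0, hrN] at this
        linarith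
    refine ⟨?_, hinc n (by omega), ?_⟩
    · have := chain_ge hinc 0 n (by omega) (by omega)
      rwa [hr0] at this
    · have := chain_ge hinc (n+1) (N+1) (by omega) le_rfl
      rwa [hrN] at this
end

section
/- Under the same hypotheses as in the monotonicity result for detrended densities (r_n satisfying r_n(1 - r_{n+1}) - r_{n-1}(1 - r_n) = ωn(r_{n+1} - r_{n-1}), r_0 = α, r_{N+1} = q₀, q₀ > 1/2): if α ≥ q₀ then r_{n-1}(1 - r_n) ≥ r_n(1 - r_{n+1}) ≥ q₀(1 - q₀) for n = 1,...,N; if α ≤ q₀ then r_{n-1}(1 - r_n) ≤ r_n(1 - r_{n+1}) ≤ q₀(1 - q₀) for n = 1,...,N. -/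
/-- Monotonicity of the detrended currents of the mean-field TASEP-LK
stationary profile in the high-density phase. -/
theorem detrended_currents_monotone
    (N : ℕ) (hN : 0 < N) (ω α q₀ : ℝ)
    (hω : 0 ≤ ω) (hα : 0 < α) (hq1 : 1 / 2 < q₀) (hq2 : q₀ < 1)
    (r : ℕ → ℝ) (hr0 : r 0 = α) (hrN : r (N + 1) = q₀)
    (hbound : ∀ n, 1 ≤ n → n ≤ N → 0 < r n + ω * n ∧ r n + ω * n < 1)
    (heq : ∀ n, 1 ≤ n → n ≤ N →
      r n * (1 - r (n + 1)) - r (n - 1) * (1 - r n)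
        = ω * n * (r (n + 1) - r (n - 1))) :
    (q₀ ≤ α → ∀ n, 1 ≤ n → n ≤ N →
      r n * (1 - r (n + 1)) ≤ r (n - 1) * (1 - r n) ∧
        q₀ * (1 - q₀) ≤ r n * (1 - r (n + 1))) ∧
    (α ≤ q₀ → ∀ n, 1 ≤ n → n ≤ N →
      r (n - 1) * (1 - r n) ≤ r n * (1 - r (n + 1)) ∧
        r n * (1 - r (n + 1)) ≤ q₀ * (1 - q₀)) := by
  -- Key rearrangement of the stationarity equation
  have key : ∀ n, 1 ≤ n → n ≤ N →
      r n - r (n - 1) = (r n + ω * n) * (r (n + 1) - r (n - 1)) := by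
    intro n h1 h2
    linear_combination heq n h1 h2
  -- weak and strict sign propagation of successive differences
  have stepdn : ∀ n, 1 ≤ n → n ≤ N → r n ≤ r (n - 1) → r (n + 1) ≤ r n := by
    intro n h1 h2 hle
    obtain ⟨hb1, hb2⟩ := hbound n h1 h2
    have hk := key n h1 h2
    nlinarith [hk, hb1, hb2, mul_pos hb1 hb1]
  have stepup : ∀ n, 1 ≤ n → n ≤ N → r (n - 1) ≤ r n → r n ≤ r (n + 1) := by
    intro n h1 h2 hle
    obtain ⟨hb1, hb2⟩ := hbound n h1 h2
    have hk := key n h1 h2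
    nlinarith [hk, hb1, hb2, mul_pos hb1 hb1]
  have stepup' : ∀ n, 1 ≤ n → n ≤ N → r (n - 1) < r n → r n < r (n + 1) := by
    intro n h1 h2 hle
    obtain ⟨hb1, hb2⟩ := hbound n h1 h2
    have hk := key n h1 h2
    nlinarith [hk, hb1, hb2, mul_pos hb1 hb1]
  have stepdn' : ∀ n, 1 ≤ n → n ≤ N → r n < r (n - 1) → r (n + 1) < r n := by
    intro n h1 h2 hle
    obtain ⟨hb1, hb2⟩ := hbound n h1 h2
    have hk := key n h1 h2
    nlinarith [hk, hb1, hb2, mul_pos hb1 hb1]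
  constructor
  · -- decreasing case
    intro hge
    -- the sequence is nonincreasing
    have h10 : r 1 ≤ r 0 := by
      by_contra h
      push_neg at h
      have chain : ∀ n, n ≤ N → r 0 < r (n + 1) ∧ r n < r (n + 1) := by
        intro n
        induction n with
        | zero => intro _; exact ⟨h, h⟩
        | succ k ih =>
          intro hk
          obtain ⟨c1, c2⟩ := ih (Nat.le_of_succ_le hk)
          have hs : r (k + 1) < r (k + 2) := by
            have := stepup' (k + 1) (by omega) hk (by simpa using c2)
            simpa using this
          exact ⟨lt_trans c1 hs, hs⟩
      obtain ⟨c1, _⟩ := chain N le_rfl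
      rw [hr0, hrN] at c1
      linarith
    have hmono : ∀ n, n ≤ N → r (n + 1) ≤ r n := by
      intro n
      induction n with
      | zero => intro _; exact h10
      | succ k ih =>
        intro hk
        have hkk : r (k + 1) ≤ r k := ih (Nat.le_of_succ_le hk)
        have := stepdn (k + 1) (by omega) hk (by simpa using hkk)
        simpa using this
    -- current is nonincreasing
    have Jstep : ∀ n, 1 ≤ n → n ≤ N →
        r n * (1 - r (n + 1)) ≤ r (n - 1) * (1 - r n) := by
      intro n h1 h2
      have e1 : r (n + 1) ≤ r n := hmono n h2
      have e2 : r n ≤ r (n - 1) := by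
        have := hmono (n - 1) (by omega)
        rwa [Nat.sub_add_cancel h1] at this
      have hnn : (0 : ℝ) ≤ ω * n := mul_nonneg hω (Nat.cast_nonneg n)
      have hmm : (0 : ℝ) ≤ ω * n * (r (n - 1) - r (n + 1)) :=
        mul_nonneg hnn (by linarith)
      have := heq n h1 h2
      nlinarith [hmm]
    -- chain the current inequalities down to N
    have Jchain : ∀ k n, 1 ≤ n → n + k ≤ N →
        r (n + k) * (1 - r (n + k + 1)) ≤ r n * (1 - r (n + 1)) := by
      intro k
      induction k with
      | zero => intro n h1 h2; simp
      | succ k ih =>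
        intro n h1 h2
        have ha : r (n + k + 1) * (1 - r (n + k + 1 + 1)) ≤
            r (n + k) * (1 - r (n + k + 1)) := by
          have := Jstep (n + k + 1) (by omega) (by omega)
          simpa using this
        have hb := ih n h1 (by omega)
        calc r (n + (k + 1)) * (1 - r (n + (k + 1) + 1))
            = r (n + k + 1) * (1 - r (n + k + 1 + 1)) := by ring_nf
          _ ≤ r (n + k) * (1 - r (n + k + 1)) := ha
          _ ≤ r n * (1 - r (n + 1)) := hb
    have hrNq : q₀ ≤ r N := by
      have := hmono N le_rfl
      rwa [hrN] at this
    have hJN : q₀ * (1 - q₀) ≤ r N * (1 - r (N + 1)) := by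
      rw [hrN]; nlinarith
    intro n h1 h2
    refine ⟨Jstep n h1 h2, ?_⟩
    have := Jchain (N - n) n h1 (by omega)
    rw [Nat.add_sub_cancel' h2] at this
    linarith
  · -- increasing case
    intro hle
    have h10 : r 0 ≤ r 1 := by
      by_contra h
      push_neg at h
      have chain : ∀ n, n ≤ N → r (n + 1) < r 0 ∧ r (n + 1) < r n := by
        intro n
        induction n with
        | zero => intro _; exact ⟨h, h⟩
        | succ k ih =>
          intro hk
          obtain ⟨c1, c2⟩ := ih (Nat.le_of_succ_le hk)
          have hs : r (k + 2) < r (k + 1) := by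
            have := stepdn' (k + 1) (by omega) hk (by simpa using c2)
            simpa using this
          exact ⟨lt_trans hs c1, hs⟩
      obtain ⟨c1, _⟩ := chain N le_rfl
      rw [hr0, hrN] at c1
      linarith
    have hmono : ∀ n, n ≤ N → r n ≤ r (n + 1) := by
      intro n
      induction n with
      | zero => intro _; exact h10
      | succ k ih =>
        intro hk
        have hkk : r k ≤ r (k + 1) := ih (Nat.le_of_succ_le hk)
        have := stepup (k + 1) (by omega) hk (by simpa using hkk)
        simpa using this
    have Jstep : ∀ n, 1 ≤ n → n ≤ N →
        r (n - 1) * (1 - r n) ≤ r n * (1 - r (n + 1)) := by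
      intro n h1 h2
      have e1 : r n ≤ r (n + 1) := hmono n h2
      have e2 : r (n - 1) ≤ r n := by
        have := hmono (n - 1) (by omega)
        rwa [Nat.sub_add_cancel h1] at this
      have hnn : (0 : ℝ) ≤ ω * n := mul_nonneg hω (Nat.cast_nonneg n)
      have hmm : (0 : ℝ) ≤ ω * n * (r (n + 1) - r (n - 1)) :=
        mul_nonneg hnn (by linarith)
      have := heq n h1 h2
      nlinarith [hmm]
    have Jchain : ∀ k n, 1 ≤ n → n + k ≤ N →
        r n * (1 - r (n + 1)) ≤ r (n + k) * (1 - r (n + k + 1)) := by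
      intro k
      induction k with
      | zero => intro n h1 h2; simp
      | succ k ih =>
        intro n h1 h2
        have ha : r (n + k) * (1 - r (n + k + 1)) ≤
            r (n + k + 1) * (1 - r (n + k + 1 + 1)) := by
          have := Jstep (n + k + 1) (by omega) (by omega)
          simpa using this
        have hb := ih n h1 (by omega)
        calc r n * (1 - r (n + 1)) ≤ r (n + k) * (1 - r (n + k + 1)) := hb
          _ ≤ r (n + k + 1) * (1 - r (n + k + 1 + 1)) := ha
          _ = r (n + (k + 1)) * (1 - r (n + (k + 1) + 1)) := by ring_nf
    have hrNq : r N ≤ q₀ := by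
      have := hmono N le_rfl
      rwa [hrN] at this
    have hrNpos : 0 < r N + ω * N := (hbound N hN le_rfl).1
    have hJN : r N * (1 - r (N + 1)) ≤ q₀ * (1 - q₀) := by
      rw [hrN]; nlinarith
    intro n h1 h2
    refine ⟨Jstep n h1 h2, ?_⟩
    have := Jchain (N - n) n h1 (by omega)
    rw [Nat.add_sub_cancel' h2] at this
    linarith
end

section
/- Let B be the real symmetric N×N tridiagonal matrix with diagonal entries B_{nn} = 1 - s_{n+1} + s_{n-1} and off-diagonal entries B_{n,n+1} = B_{n+1,n} = -√(q_n(1 - q_{n+1})), where s_n = σ_n√(q₀(1-q₀)) and q_n = q₀ + ωn with q₀ ∈ (1/2,1), ω ≥ 0, q_{N+1} < 1. Let w_0 ≥ 0 and w_1,...,w_{N+1} > 0 be real numbers. Then the smallest eigenvalue μ of B satisfies μ ≥ 1 - √(q₀(1-q₀)) · max_{1 ≤ n ≤ N} (σ_{n+1} - σ_{n-1} + (w_{n+1} + w_{n-1})/w_n). -/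
/-- Generalized Gershgorin lower bound for the smallest eigenvalue of the
simplified relaxation matrix B of the mean-field TASEP-LK. -/
theorem gershgorin_type_lower_bound
    (N : ℕ) (hN : 0 < N) (q₀ α ω x₀ : ℝ)
    (hq1 : 1 / 2 < q₀) (hq2 : q₀ < 1) (hω : 0 ≤ ω)
    (hx : x₀ = 1 / (2 * Real.sqrt (q₀ * (1 - q₀))))
    (σ s q : ℕ → ℝ)
    (hσ0 : σ 0 = 2 * x₀ * α) (hσ : ∀ n, σ (n + 1) = 2 * x₀ - 1 / σ n)
    (hs : ∀ n, s n = σ n * Real.sqrt (q₀ * (1 - q₀)))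
    (hq : ∀ n, q n = q₀ + ω * n) (hqN : q (N + 1) < 1)
    (B : Matrix (Fin N) (Fin N) ℝ) (hB : B.IsHermitian)
    (hdiag : ∀ i : Fin N, B i i = 1 - s ((i : ℕ) + 2) + s (i : ℕ))
    (hsup : ∀ i j : Fin N, (j : ℕ) = (i : ℕ) + 1 →
      B i j = -Real.sqrt (q ((i : ℕ) + 1) * (1 - q ((i : ℕ) + 2))))
    (hzero : ∀ i j : Fin N, ((i : ℕ) + 1 < (j : ℕ) ∨ (j : ℕ) + 1 < (i : ℕ)) →
      B i j = 0)
    (w : ℕ → ℝ) (hw0 : 0 ≤ w 0)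
    (hw : ∀ n, 1 ≤ n → n ≤ N + 1 → 0 < w n) :
    1 - Real.sqrt (q₀ * (1 - q₀)) *
        (Finset.univ.sup'
          (Finset.univ_nonempty_iff.mpr (Fin.pos_iff_nonempty.mp hN))
          (fun i : Fin N =>
            σ ((i : ℕ) + 2) - σ (i : ℕ)
              + (w ((i : ℕ) + 2) + w (i : ℕ)) / w ((i : ℕ) + 1)))
      ≤ ⨅ i, hB.eigenvalues i := by
  haveI : Nonempty (Fin N) := Fin.pos_iff_nonempty.mp hN
  set r := Real.sqrt (q₀ * (1 - q₀)) with hrdef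
  have hr0 : 0 ≤ r := Real.sqrt_nonneg _
  -- monotonicity of q and the off-diagonal bound
  have hqmono : ∀ m : ℕ, q₀ ≤ q m := by
    intro m
    rw [hq]
    have : (0:ℝ) ≤ ω * m := by positivity
    linarith
  have hqstep : ∀ m : ℕ, q m ≤ q (m + 1) := by
    intro m
    rw [hq, hq]
    push_cast
    nlinarith
  have hoff : ∀ m : ℕ, Real.sqrt (q m * (1 - q (m + 1))) ≤ r := by
    intro m
    apply Real.sqrt_le_sqrt
    have h1 : q₀ ≤ q m := hqmono m
    have h2 : q m ≤ q (m + 1) := hqstep m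
    nlinarith [mul_nonneg (by linarith : (0:ℝ) ≤ q m - q₀)
        (by linarith : (0:ℝ) ≤ q m + q₀ - 1),
      mul_nonneg (by linarith : (0:ℝ) ≤ q m) (by linarith : (0:ℝ) ≤ q (m+1) - q m)]
  have hsym : ∀ i j : Fin N, B j i = B i j := by
    intro i j
    have := hB.apply i j
    simpa using this
  refine le_ciInf fun jj => ?_
  set μ := hB.eigenvalues jj with hμdef
  set v : Fin N → ℝ := (fun i => hB.eigenvectorBasis jj i) with hvdef
  have hmv : B.mulVec v = μ • v := hB.mulVec_eigenvectorBasis jj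
  have hvne : ∃ l, v l ≠ 0 := by
    by_contra hcon
    push_neg at hcon
    have : hB.eigenvectorBasis jj = 0 := by
      ext l
      exact hcon l
    exact hB.eigenvectorBasis.orthonormal.ne_zero jj this
  -- choose the maximizing index
  obtain ⟨k, -, hk⟩ := Finset.exists_max_image Finset.univ
    (fun i : Fin N => |v i| / w ((i : ℕ) + 1)) Finset.univ_nonempty
  have hk' : ∀ i : Fin N, |v i| / w ((i : ℕ) + 1) ≤ |v k| / w ((k : ℕ) + 1) :=
    fun i => hk i (Finset.mem_univ i)
  have hwpos : ∀ i : Fin N, 0 < w ((i : ℕ) + 1) := by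
    intro i
    exact hw _ (by omega) (by omega : (i : ℕ) + 1 ≤ N + 1)
  set f : Fin N → ℝ := fun i => |v i| / w ((i : ℕ) + 1) with hfdef
  have hfk : 0 < f k := by
    obtain ⟨l, hl⟩ := hvne
    have h1 : 0 < f l := div_pos (abs_pos.mpr hl) (hwpos l)
    exact lt_of_lt_of_le h1 (hk' l)
  have hvk : 0 < |v k| := by
    have := hfk
    rw [hfdef] at this
    by_contra hcon
    push_neg at hcon
    have : |v k| = 0 := le_antisymm hcon (abs_nonneg _)
    simp [f, this] at hfk
  have hvb : ∀ i : Fin N, |v i| ≤ f k * w ((i : ℕ) + 1) :=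
    fun i => by
      have := hk' i
      rw [div_le_iff₀ (hwpos i)] at this
      simpa [hfdef] using this
  -- w-values around k are nonnegative/positive
  have hwk2 : 0 < w ((k : ℕ) + 2) := hw _ (by omega) (by omega : (k : ℕ) + 2 ≤ N + 1)
  have hwk0 : 0 ≤ w (k : ℕ) := by
    rcases Nat.eq_zero_or_pos (k : ℕ) with h | h
    · rwa [h]
    · exact le_of_lt (hw _ h (by omega))
  -- the eigenvalue equation at row k
  have hrow : ∑ l, B k l * v l = μ * v k := by
    have := congrFun hmv k
    simpa [Matrix.mulVec, dotProduct, Pi.smul_apply, smul_eq_mul] using this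
  have hsplit : μ * v k - B k k * v k = ∑ l ∈ Finset.univ.erase k, B k l * v l := by
    have h : B k k * v k + ∑ l ∈ Finset.univ.erase k, B k l * v l
        = ∑ l, B k l * v l :=
      Finset.add_sum_erase Finset.univ (fun l => B k l * v l) (Finset.mem_univ k)
    linarith
  set c2 := r * (f k * w ((k : ℕ) + 2)) with hc2def
  set c0 := r * (f k * w (k : ℕ)) with hc0def
  have hc2 : 0 ≤ c2 := by positivity
  have hc0 : 0 ≤ c0 := mul_nonneg hr0 (mul_nonneg hfk.le hwk0)
  -- termwise bound on the off-diagonal contributions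
  have hterm : ∀ l ∈ Finset.univ.erase k, |B k l * v l| ≤
      (if (l : ℕ) = (k : ℕ) + 1 then c2 else 0)
        + (if (l : ℕ) + 1 = (k : ℕ) then c0 else 0) := by
    intro l hl
    have hlk : l ≠ k := Finset.ne_of_mem_erase hl
    have hlkv : (l : ℕ) ≠ (k : ℕ) := fun h => hlk (Fin.ext h)
    rw [abs_mul]
    by_cases h1 : (l : ℕ) = (k : ℕ) + 1
    · have h2 : ¬ ((l : ℕ) + 1 = (k : ℕ)) := by omega
      rw [if_pos h1, if_neg h2, add_zero]
      have hBle : |B k l| ≤ r := by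
        rw [hsup k l h1, abs_neg, abs_of_nonneg (Real.sqrt_nonneg _)]
        exact hoff _
      have hvle : |v l| ≤ f k * w ((k : ℕ) + 2) := by
        have := hvb l
        rwa [h1] at this
      calc |B k l| * |v l| ≤ r * (f k * w ((k : ℕ) + 2)) :=
            mul_le_mul hBle hvle (abs_nonneg _) hr0
        _ = c2 := rfl
    · by_cases h2 : (l : ℕ) + 1 = (k : ℕ)
      · rw [if_neg h1, if_pos h2, zero_add]
        have hBle : |B k l| ≤ r := by
          rw [hsym l k, hsup l k h2.symm, abs_neg,
            abs_of_nonneg (Real.sqrt_nonneg _)]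
          exact hoff _
        have hvle : |v l| ≤ f k * w (k : ℕ) := by
          have := hvb l
          rwa [h2] at this
        calc |B k l| * |v l| ≤ r * (f k * w (k : ℕ)) :=
              mul_le_mul hBle hvle (abs_nonneg _) hr0
          _ = c0 := rfl
      · rw [if_neg h1, if_neg h2, add_zero]
        have : B k l = 0 := hzero k l (by omega)
        simp [this]
  -- the two indicator sums
  have hsum1 : (∑ l ∈ Finset.univ.erase k,
      (if (l : ℕ) = (k : ℕ) + 1 then c2 else 0)) ≤ c2 := by
    refine le_trans (Finset.sum_le_sum_of_subset_of_nonneg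
      (Finset.erase_subset _ _) (fun l _ _ => by positivity)) ?_
    by_cases hk1 : (k : ℕ) + 1 < N
    · have : (∑ l : Fin N, (if (l : ℕ) = (k : ℕ) + 1 then c2 else 0))
          = ∑ l : Fin N, (if l = (⟨(k : ℕ) + 1, hk1⟩ : Fin N) then c2 else 0) := by
        refine Finset.sum_congr rfl fun l _ => ?_
        congr 1
        simp [Fin.ext_iff]
      rw [this, Fintype.sum_ite_eq']
    · have : (∑ l : Fin N, (if (l : ℕ) = (k : ℕ) + 1 then c2 else 0)) = 0 := by
        refine Finset.sum_eq_zero fun l _ => ?_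
        have : (l : ℕ) < N := l.isLt
        rw [if_neg (by omega)]
      rw [this]; exact hc2
  have hsum0 : (∑ l ∈ Finset.univ.erase k,
      (if (l : ℕ) + 1 = (k : ℕ) then c0 else 0)) ≤ c0 := by
    refine le_trans (Finset.sum_le_sum_of_subset_of_nonneg
      (Finset.erase_subset _ _) (fun l _ _ => by
        split <;> [exact hc0; exact le_refl 0])) ?_
    by_cases hk0 : 0 < (k : ℕ)
    · have hlt : (k : ℕ) - 1 < N := by omega
      have hval : ((⟨(k : ℕ) - 1, hlt⟩ : Fin N) : ℕ) = (k : ℕ) - 1 := rfl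
      have : (∑ l : Fin N, (if (l : ℕ) + 1 = (k : ℕ) then c0 else 0))
          = ∑ l : Fin N, (if l = (⟨(k : ℕ) - 1, hlt⟩ : Fin N) then c0 else 0) := by
        refine Finset.sum_congr rfl fun l _ => if_congr ?_ rfl rfl
        rw [Fin.ext_iff, hval]
        omega
      rw [this, Fintype.sum_ite_eq']
    · have : (∑ l : Fin N, (if (l : ℕ) + 1 = (k : ℕ) then c0 else 0)) = 0 := by
        refine Finset.sum_eq_zero fun l _ => ?_
        rw [if_neg (by omega)]
      rw [this]; exact hc0
  -- combine: |μ - B k k| * |v k| ≤ c2 + c0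
  have hmain : |μ - B k k| * |v k| ≤ c2 + c0 := by
    have h1 : |μ - B k k| * |v k| = |μ * v k - B k k * v k| := by
      rw [← abs_mul]; ring_nf
    rw [h1, hsplit]
    calc |∑ l ∈ Finset.univ.erase k, B k l * v l|
        ≤ ∑ l ∈ Finset.univ.erase k, |B k l * v l| := Finset.abs_sum_le_sum_abs _ _
      _ ≤ ∑ l ∈ Finset.univ.erase k,
            ((if (l : ℕ) = (k : ℕ) + 1 then c2 else 0)
              + (if (l : ℕ) + 1 = (k : ℕ) then c0 else 0)) :=
          Finset.sum_le_sum hterm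
      _ = (∑ l ∈ Finset.univ.erase k, (if (l : ℕ) = (k : ℕ) + 1 then c2 else 0))
          + ∑ l ∈ Finset.univ.erase k, (if (l : ℕ) + 1 = (k : ℕ) then c0 else 0) :=
          Finset.sum_add_distrib
      _ ≤ c2 + c0 := add_le_add hsum1 hsum0
  -- divide through
  have hvkeq : |v k| = f k * w ((k : ℕ) + 1) := by
    rw [hfdef]
    exact (div_mul_cancel₀ _ (ne_of_gt (hwpos k))).symm
  have hdivided : |μ - B k k| * w ((k : ℕ) + 1) ≤ r * (w ((k : ℕ) + 2) + w (k : ℕ)) := by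
    have h2 : |μ - B k k| * (f k * w ((k : ℕ) + 1))
        ≤ f k * (r * (w ((k : ℕ) + 2) + w (k : ℕ))) := by
      rw [← hvkeq]
      calc |μ - B k k| * |v k| ≤ c2 + c0 := hmain
        _ = f k * (r * (w ((k : ℕ) + 2) + w (k : ℕ))) := by
            rw [hc2def, hc0def]; ring
    have h3 : f k * (|μ - B k k| * w ((k : ℕ) + 1))
        ≤ f k * (r * (w ((k : ℕ) + 2) + w (k : ℕ))) := by
      calc f k * (|μ - B k k| * w ((k : ℕ) + 1))
          = |μ - B k k| * (f k * w ((k : ℕ) + 1)) := by ring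
        _ ≤ _ := h2
    exact le_of_mul_le_mul_left h3 hfk
  have hBkk : B k k = 1 - r * (σ ((k : ℕ) + 2) - σ (k : ℕ)) := by
    rw [hdiag k, hs, hs]; ring
  have hμge : 1 - r * (σ ((k : ℕ) + 2) - σ (k : ℕ)
      + (w ((k : ℕ) + 2) + w (k : ℕ)) / w ((k : ℕ) + 1)) ≤ μ := by
    have h4 : B k k - μ ≤ |μ - B k k| := by
      rw [abs_sub_comm]
      exact le_abs_self _
    have h5 : (B k k - μ) * w ((k : ℕ) + 1) ≤ r * (w ((k : ℕ) + 2) + w (k : ℕ)) :=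
      le_trans (mul_le_mul_of_nonneg_right h4 (hwpos k).le) hdivided
    have h6 : B k k - μ ≤ r * (w ((k : ℕ) + 2) + w (k : ℕ)) / w ((k : ℕ) + 1) := by
      rw [le_div_iff₀ (hwpos k)]
      exact h5
    rw [hBkk] at h6
    have h7 : r * ((w ((k : ℕ) + 2) + w (k : ℕ)) / w ((k : ℕ) + 1))
        = r * (w ((k : ℕ) + 2) + w (k : ℕ)) / w ((k : ℕ) + 1) := by ring
    have := h6
    nlinarith [h6]
  refine le_trans ?_ hμge
  have hle : σ ((k : ℕ) + 2) - σ (k : ℕ)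
      + (w ((k : ℕ) + 2) + w (k : ℕ)) / w ((k : ℕ) + 1)
      ≤ Finset.univ.sup'
          (Finset.univ_nonempty_iff.mpr (Fin.pos_iff_nonempty.mp hN))
          (fun i : Fin N =>
            σ ((i : ℕ) + 2) - σ (i : ℕ)
              + (w ((i : ℕ) + 2) + w (i : ℕ)) / w ((i : ℕ) + 1)) :=
    Finset.le_sup'
      (fun i : Fin N =>
        σ ((i : ℕ) + 2) - σ (i : ℕ)
          + (w ((i : ℕ) + 2) + w (i : ℕ)) / w ((i : ℕ) + 1))
      (Finset.mem_univ k)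
  have := mul_le_mul_of_nonneg_left hle hr0
  linarith
end

section
/- Let B be the symmetric tridiagonal N×N matrix with entries B_{nn} = 1 - s_{n+1} + s_{n-1} and B_{n,n±1} = -√(q_n(1-q_{n+1}))/√(q_{n-1}(1-q_n)) as described, where s_n solves the Riccati equation with s_0 = α ≥ q₀ ∈ (1/2,1). Since in this case s_{n+1} ≤ s_{n-1} for all n, the smallest eigenvalue μ of B satisfies μ ≥ 1 - 2√(q₀(1 - q₀)). -/
/-- Gershgorin lower bound μ ≥ 1 - 2√(q₀(1-q₀)) for the smallest eigenvalue of
the simplified relaxation matrix B, in the case α ≥ q₀ (non-increasing s). -/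
theorem gershgorin_lower_bound_alpha_large
    (N : ℕ) (hN : 0 < N) (q₀ α γ ω : ℝ)
    (hq1 : 1 / 2 < q₀) (hq2 : q₀ < 1) (hω : 0 ≤ ω)
    (hγ : γ = (1 - q₀) / q₀) (hα : q₀ ≤ α)
    (s q : ℕ → ℝ)
    (hs : ∀ n, s n = q₀ + (2 * q₀ - 1) *
      ((1 - γ ^ n * (α - q₀) / (α - (1 - q₀)))⁻¹ - 1))
    (hq : ∀ n, q n = q₀ + ω * n) (hqN : q (N + 1) < 1)
    (B : Matrix (Fin N) (Fin N) ℝ) (hB : B.IsHermitian)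
    (hdiag : ∀ i : Fin N, B i i = 1 - s ((i : ℕ) + 2) + s (i : ℕ))
    (hsup : ∀ i j : Fin N, (j : ℕ) = (i : ℕ) + 1 →
      B i j = -Real.sqrt (q ((i : ℕ) + 1) * (1 - q ((i : ℕ) + 2))))
    (hzero : ∀ i j : Fin N, ((i : ℕ) + 1 < (j : ℕ) ∨ (j : ℕ) + 1 < (i : ℕ)) →
      B i j = 0) :
    1 - 2 * Real.sqrt (q₀ * (1 - q₀)) ≤ ⨅ i, hB.eigenvalues i := by
  classical
  haveI : Nonempty (Fin N) := ⟨⟨0, hN⟩⟩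
  have hq0pos : 0 < q₀ := by linarith
  -- basic facts about γ and c
  have hγ0 : 0 ≤ γ := by rw [hγ]; exact div_nonneg (by linarith) (by linarith)
  have hγ1 : γ ≤ 1 := by
    rw [hγ, div_le_one hq0pos]; linarith
  have hD : 0 < α - (1 - q₀) := by linarith
  have hαq : 0 ≤ α - q₀ := by linarith
  have hc1 : (α - q₀) / (α - (1 - q₀)) < 1 := by
    rw [div_lt_one hD]; linarith
  -- s is antitone with step 2
  have hs_step : ∀ n : ℕ, s (n + 2) ≤ s n := by
    intro n
    rw [hs, hs]
    have hpow : ∀ m : ℕ, 0 ≤ γ ^ m * (α - q₀) / (α - (1 - q₀)) ∧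
        γ ^ m * (α - q₀) / (α - (1 - q₀)) < 1 := by
      intro m
      have h1 : γ ^ m ≤ 1 := pow_le_one₀ hγ0 hγ1
      have h1' : 0 ≤ γ ^ m := pow_nonneg hγ0 m
      refine ⟨div_nonneg (mul_nonneg h1' hαq) hD.le, ?_⟩
      rw [div_lt_one hD]
      nlinarith
    have h1 := hpow n
    have h2 := hpow (n + 2)
    have hmono : γ ^ (n + 2) * (α - q₀) / (α - (1 - q₀))
        ≤ γ ^ n * (α - q₀) / (α - (1 - q₀)) := by
      have hp : γ ^ (n + 2) ≤ γ ^ n := pow_le_pow_of_le_one hγ0 hγ1 (by omega)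
      have : γ ^ (n + 2) * (α - q₀) ≤ γ ^ n * (α - q₀) :=
        mul_le_mul_of_nonneg_right hp hαq
      exact div_le_div_of_nonneg_right this hD.le
    have hinv : (1 - γ ^ (n + 2) * (α - q₀) / (α - (1 - q₀)))⁻¹
        ≤ (1 - γ ^ n * (α - q₀) / (α - (1 - q₀)))⁻¹ := by
      apply inv_anti₀ (by linarith [h2.2]) (by linarith)
    nlinarith [hinv]
  -- bound on the off-diagonal entries
  have hentry : ∀ m : ℕ, m + 2 ≤ N + 1 →
      Real.sqrt (q (m + 1) * (1 - q (m + 2))) ≤ Real.sqrt (q₀ * (1 - q₀)) := by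
    intro m hm
    apply Real.sqrt_le_sqrt
    have h1 : q₀ ≤ q (m + 1) := by rw [hq]; nlinarith [(Nat.cast_nonneg (m+1) : (0:ℝ) ≤ (m+1 : ℕ))]
    have h2 : q (m + 1) ≤ q (m + 2) := by
      rw [hq, hq]; push_cast; nlinarith
    have h3 : q (m + 2) ≤ q (N + 1) := by
      rw [hq, hq]
      have : (↑(m + 2) : ℝ) ≤ (↑(N + 1) : ℝ) := by exact_mod_cast hm
      push_cast at this ⊢; nlinarith
    nlinarith
  -- Gershgorin
  have key : ∀ i : Fin N, 1 - 2 * Real.sqrt (q₀ * (1 - q₀)) ≤ hB.eigenvalues i := by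
    intro i
    have hmem : hB.eigenvalues i ∈ spectrum ℝ B := hB.eigenvalues_mem_spectrum_real i
    have heig : Module.End.HasEigenvalue (Matrix.toLin' B) (hB.eigenvalues i) := by
      have hcoe : (Matrix.toLinAlgEquiv' B : (Fin N → ℝ) →ₗ[ℝ] (Fin N → ℝ))
          = Matrix.toLin' B := rfl
      rw [Module.End.hasEigenvalue_iff_mem_spectrum, ← hcoe,
        AlgEquiv.spectrum_eq Matrix.toLinAlgEquiv' B]
      exact hmem
    obtain ⟨k, hk⟩ := eigenvalue_mem_ball heig
    rw [Metric.mem_closedBall, Real.dist_eq] at hk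
    have hrow : ∑ j ∈ Finset.univ.erase k, ‖B k j‖ ≤ 2 * Real.sqrt (q₀ * (1 - q₀)) := by
      set T : Finset (Fin N) :=
        (Finset.univ.erase k).filter
          (fun j => (j : ℕ) = (k : ℕ) + 1 ∨ (k : ℕ) = (j : ℕ) + 1) with hT
      have hsum_eq : ∑ j ∈ Finset.univ.erase k, ‖B k j‖ = ∑ j ∈ T, ‖B k j‖ := by
        symm
        apply Finset.sum_subset (Finset.filter_subset _ _)
        intro j hj hjT
        rw [Finset.mem_filter] at hjT
        push_neg at hjT
        have hjk : j ≠ k := Finset.ne_of_mem_erase hj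
        have := hjT hj
        have hzero' : B k j = 0 := by
          apply hzero
          have hne : (j : ℕ) ≠ (k : ℕ) := fun h => hjk (Fin.ext h)
          omega
        simp [hzero']
      rw [hsum_eq]
      have hterm : ∀ j ∈ T, ‖B k j‖ ≤ Real.sqrt (q₀ * (1 - q₀)) := by
        intro j hj
        rw [Finset.mem_filter] at hj
        rcases hj.2 with h | h
        · rw [hsup k j h, norm_neg, Real.norm_eq_abs,
            abs_of_nonneg (Real.sqrt_nonneg _)]
          exact hentry k (by omega)
        · have hsym : B k j = B j k := by
            have := hB.apply j k
            simpa using this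
          rw [hsym, hsup j k h, norm_neg, Real.norm_eq_abs,
            abs_of_nonneg (Real.sqrt_nonneg _)]
          exact hentry j (by omega)
      have hcard : T.card ≤ 2 := by
        have hsub : T ⊆ (Finset.univ.filter (fun j : Fin N => (j : ℕ) = (k : ℕ) + 1)) ∪
            (Finset.univ.filter (fun j : Fin N => (k : ℕ) = (j : ℕ) + 1)) := by
          intro j hj
          rw [Finset.mem_filter] at hj
          rcases hj.2 with h | h
          · exact Finset.mem_union_left _ (Finset.mem_filter.mpr ⟨Finset.mem_univ _, h⟩)
          · exact Finset.mem_union_right _ (Finset.mem_filter.mpr ⟨Finset.mem_univ _, h⟩)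
        have h1 : (Finset.univ.filter (fun j : Fin N => (j : ℕ) = (k : ℕ) + 1)).card ≤ 1 := by
          apply Finset.card_le_one.mpr
          intro a ha b hb
          rw [Finset.mem_filter] at ha hb
          exact Fin.ext (ha.2.trans hb.2.symm)
        have h2 : (Finset.univ.filter (fun j : Fin N => (k : ℕ) = (j : ℕ) + 1)).card ≤ 1 := by
          apply Finset.card_le_one.mpr
          intro a ha b hb
          rw [Finset.mem_filter] at ha hb
          exact Fin.ext (by omega)
        calc T.card ≤ _ := Finset.card_le_card hsub
          _ ≤ _ := Finset.card_union_le _ _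
          _ ≤ 2 := by omega
      calc ∑ j ∈ T, ‖B k j‖ ≤ T.card • Real.sqrt (q₀ * (1 - q₀)) :=
            Finset.sum_le_card_nsmul T _ _ hterm
        _ = (T.card : ℝ) * Real.sqrt (q₀ * (1 - q₀)) := by
            rw [nsmul_eq_mul]
        _ ≤ 2 * Real.sqrt (q₀ * (1 - q₀)) := by
            apply mul_le_mul_of_nonneg_right _ (Real.sqrt_nonneg _)
            exact_mod_cast hcard
    have hdiag' : (1 : ℝ) ≤ B k k := by
      rw [hdiag k]
      have := hs_step (k : ℕ)
      linarith
    have habs := abs_sub_abs_le_abs_sub (hB.eigenvalues i) (B k k)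
    have : |hB.eigenvalues i - B k k| ≤ 2 * Real.sqrt (q₀ * (1 - q₀)) :=
      hk.trans hrow
    have h2 : B k k - hB.eigenvalues i ≤ 2 * Real.sqrt (q₀ * (1 - q₀)) := by
      have := abs_le.mp this
      linarith [this.1]
    linarith
  exact le_ciInf key
end

section
/- Let (σ_n)_{n≥0} be defined by σ_0 = 2x₀α, σ_{n+1} = 2x₀ - 1/σ_n with x₀ = 1/(2√(q₀(1-q₀))), q₀ ∈ (1/2,1), 1 - q₀ < α < q₀. For x ∈ ℝ define v_0(x) = 0, v_1(x) = 1, v_{n+1}(x) = (2x - σ_{n+1} + σ_{n-1})v_n(x) - v_{n-1}(x). Then for every x > 1 the sequence (v_n(x))_{n≥0} is nonoscillatory, i.e. eventually of constant sign; and for every x < 1 it is oscillatory. -/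
/-!
The Riccati orbit `σ` increases strictly inside the interval between the two fixed points of
`t ↦ 2x₀ - 1/t`, so `ξ_n = σ_{n+1} - σ_{n-1}` is positive and tends to `0`, and `v(x)` solves
`w_{n+1} = c_n w_n - w_{n-1}` with `c_n = 2x - ξ_n`.
For `x > 1` eventually `c_n ≥ 2`; then a solution that is positive and nondecreasing at one step
stays so, and one that never is must shrink towards zero without crossing it.
For `x < 1` we have `c_n < 2x < 2`, so along a positive solution the differences `w_{n+1} - w_n`
drop by at least `(2 - 2x) w_{n+1}` at each step: the solution becomes decreasing and is then
driven below zero linearly.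
-/

open Filter Topology

theorem exists_lt_zero_of_le_sub {α : Type*} [AddCommGroup α] [LinearOrder α]
    [IsOrderedAddMonoid α] [Archimedean α] {u : ℕ → α} {δ : α} {N : ℕ} (hδ : 0 < δ)
    (hu : ∀ n, N ≤ n → u (n + 1) ≤ u n - δ) : ∃ n, N ≤ n ∧ u n < 0 := by
  have hdrop : ∀ k : ℕ, u (N + k) ≤ u N - k • δ := by
    intro k
    induction k with
    | zero => simp
    | succ k ih =>
      calc u (N + (k + 1)) ≤ u (N + k) - δ := hu (N + k) (by omega)
        _ ≤ u N - k • δ - δ := sub_le_sub_right ih δ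
        _ = u N - (k + 1) • δ := by rw [succ_nsmul, sub_sub]
  obtain ⟨k, hk⟩ := Archimedean.arch (u N) hδ
  refine ⟨N + (k + 1), by omega, ?_⟩
  calc u (N + (k + 1)) ≤ u N - (k + 1) • δ := hdrop (k + 1)
    _ = (u N - k • δ) - δ := by rw [succ_nsmul, sub_sub]
    _ ≤ -δ := by simpa using sub_nonpos.2 hk
    _ < 0 := neg_neg_iff_pos.2 hδ

def SolvesThreeTerm (c w : ℕ → ℝ) : Prop :=
  ∀ n, w (n + 2) = c n * w (n + 1) - w n

def EventuallyConstSign (w : ℕ → ℝ) : Prop :=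
  ∃ m, (∀ n, m ≤ n → 0 < w n) ∨ (∀ n, m ≤ n → w n < 0)

theorem EventuallyConstSign.of_mul_succ_pos {w : ℕ → ℝ} {m : ℕ}
    (h : ∀ n, m ≤ n → 0 < w n * w (n + 1)) : EventuallyConstSign w := by
  have hm : ∀ n, m ≤ n → 0 < w m * w n := by
    intro n hn
    induction n, hn using Nat.le_induction with
    | base => exact mul_self_pos.2 (left_ne_zero_of_mul (h m le_rfl).ne')
    | succ n hn ih => nlinarith [h n hn, sq_nonneg (w n)]
  rcases (left_ne_zero_of_mul (hm m le_rfl).ne').lt_or_gt with hneg | hpos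
  · exact ⟨m, Or.inr fun n hn => (neg_iff_neg_of_mul_pos (hm n hn)).1 hneg⟩
  · exact ⟨m, Or.inl fun n hn => (pos_iff_pos_of_mul_pos (hm n hn)).1 hpos⟩

namespace SolvesThreeTerm

variable {c w : ℕ → ℝ} {m : ℕ}

theorem neg (h : SolvesThreeTerm c w) : SolvesThreeTerm c (-w) := fun n => by
  simp only [Pi.neg_apply, h n]; ring

theorem not_both_zero (h : SolvesThreeTerm c w) (h01 : w 0 ≠ 0 ∨ w 1 ≠ 0) :
    ∀ n, w n ≠ 0 ∨ w (n + 1) ≠ 0 := by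
  intro n
  induction n with
  | zero => exact h01
  | succ n ih =>
    by_contra! hzero
    have hwn : w n = 0 := by
      have hrec := h n
      rw [hzero.1, hzero.2] at hrec
      linarith
    exact ih.elim (· hwn) (· hzero.1)

theorem pos_of_le_of_pos (h : SolvesThreeTerm c w) (hc : ∀ n, m ≤ n → 2 ≤ c n) {n : ℕ}
    (hn : m ≤ n) (hle : w n ≤ w (n + 1)) (hpos : 0 < w (n + 1)) :
    ∀ k, n < k → 0 < w k := by
  have hinv : ∀ k, n ≤ k → w k ≤ w (k + 1) ∧ 0 < w (k + 1) := by
    intro k hk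
    induction k, hk using Nat.le_induction with
    | base => exact ⟨hle, hpos⟩
    | succ k hk ih =>
      have hck := hc k (hn.trans hk)
      have hrec := h k
      constructor <;> nlinarith [ih.1, ih.2]
  intro k hk
  obtain ⟨j, rfl⟩ : ∃ j, k = j + 1 := ⟨k - 1, by omega⟩
  exact (hinv j (by omega)).2

theorem eventuallyConstSign (h : SolvesThreeTerm c w) (hc : ∀ n, m ≤ n → 2 ≤ c n)
    (h01 : w 0 ≠ 0 ∨ w 1 ≠ 0) : EventuallyConstSign w := by
  by_cases hP : ∃ n, m ≤ n ∧ w n ≤ w (n + 1) ∧ 0 < w (n + 1)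
  · obtain ⟨n, hn, hle, hpos⟩ := hP
    exact ⟨n + 1, Or.inl fun k hk => h.pos_of_le_of_pos hc hn hle hpos k hk⟩
  by_cases hQ : ∃ n, m ≤ n ∧ w (n + 1) ≤ w n ∧ w (n + 1) < 0
  · obtain ⟨n, hn, hle, hneg⟩ := hQ
    refine ⟨n + 1, Or.inr fun k hk => neg_pos.1 ?_⟩
    exact h.neg.pos_of_le_of_pos hc hn (neg_le_neg hle) (neg_pos.2 hneg) k hk
  push Not at hP hQ
  -- Otherwise `w` never steps away from zero after `m`, so it can neither vanish nor change sign.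
  have hne : ∀ n, m ≤ n → w (n + 1) ≠ 0 := by
    intro n hn hzero
    have hrec := h n
    rw [hzero] at hrec
    rcases (h.not_both_zero h01 n).resolve_right (· hzero) |>.lt_or_gt with hneg | hpos
    · exact (hP (n + 1) (by omega) (by rw [hzero, hrec]; linarith)).not_gt (by linarith)
    · exact (hQ (n + 1) (by omega) (by rw [hzero, hrec]; linarith)).not_gt (by linarith)
  have hsign : ∀ n, m + 1 ≤ n → 0 < w n * w (n + 1) := by
    intro n hn
    obtain ⟨k, rfl⟩ : ∃ k, n = k + 1 := ⟨n - 1, by omega⟩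
    rcases (hne (k + 1) (by omega)).lt_or_gt with hneg | hpos
    · have : w (k + 1) < w (k + 2) := by by_contra! hle; linarith [hQ (k + 1) (by omega) hle]
      exact mul_pos_of_neg_of_neg (by linarith) hneg
    · have : w (k + 2) < w (k + 1) := by by_contra! hle; linarith [hP (k + 1) (by omega) hle]
      exact mul_pos (by linarith) hpos
  exact .of_mul_succ_pos hsign

theorem not_eventually_pos (h : SolvesThreeTerm c w) {κ : ℝ} (hκ : κ < 2)
    (hc : ∀ n, m ≤ n → c n ≤ κ) : ¬ ∀ n, m ≤ n → 0 < w n := by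
  intro hpos
  set Δ : ℕ → ℝ := fun n => w (n + 1) - w n with hΔdef
  have hΔ : ∀ n, m ≤ n → Δ (n + 1) ≤ Δ n - (2 - κ) * w (n + 1) := by
    intro n hn
    have hrec := h n
    have hcn := hc n hn
    have hwn := hpos (n + 1) (by omega)
    simp only [hΔdef]
    nlinarith
  by_cases hinc : ∀ n, m ≤ n → 0 ≤ Δ n
  · have hmono : MonotoneOn w (Set.Ici m) :=
      monotoneOn_nat_Ici_of_le_succ fun n hn => sub_nonneg.1 (hinc n hn)
    obtain ⟨n, hn, hneg⟩ := exists_lt_zero_of_le_sub (u := Δ) (δ := (2 - κ) * w m) (N := m)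
      (mul_pos (by linarith) (hpos m le_rfl)) fun n hn => by
        have := hmono (Set.mem_Ici.2 le_rfl) (Set.mem_Ici.2 (by omega : m ≤ n + 1)) (by omega)
        nlinarith [hΔ n hn]
    exact (hinc n hn).not_gt hneg
  · push Not at hinc
    obtain ⟨N, hN, hΔN⟩ := hinc
    have hanti : AntitoneOn Δ (Set.Ici m) := antitoneOn_nat_Ici_of_succ_le fun n hn => by
      nlinarith [hΔ n hn, hpos (n + 1) (by omega)]
    obtain ⟨n, hn, hneg⟩ := exists_lt_zero_of_le_sub (u := w) (neg_pos.2 hΔN) fun n hn => by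
      have := hanti (Set.mem_Ici.2 hN) (Set.mem_Ici.2 (hN.trans hn)) hn
      simp only [hΔdef] at this ⊢
      linarith
    exact (hpos n (hN.trans hn)).not_gt hneg

theorem not_eventuallyConstSign (h : SolvesThreeTerm c w) {κ : ℝ} (hκ : κ < 2)
    (hc : ∀ n, m ≤ n → c n ≤ κ) : ¬ EventuallyConstSign w := by
  rintro ⟨N, hpos | hneg⟩
  · exact h.not_eventually_pos hκ (m := max m N) (fun n hn => hc n (le_of_max_le_left hn))
      fun n hn => hpos n (le_of_max_le_right hn)
  · exact h.neg.not_eventually_pos hκ (m := max m N) (fun n hn => hc n (le_of_max_le_left hn))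
      fun n hn => neg_pos.2 (hneg n (le_of_max_le_right hn))

end SolvesThreeTerm

theorem riccati_map_mem_Ioo {s L t : ℝ} (hs : 0 < s) (hsL : s * L = 1) (ht : t ∈ Set.Ioo s L) :
    s + L - 1 / t ∈ Set.Ioo t L := by
  obtain ⟨hst, htL⟩ := ht
  have ht0 : 0 < t := hs.trans hst
  -- `s` and `L` are the roots of `t² - (s + L) t + 1`
  have hup : s + L - 1 / t - t = (t - s) * (L - t) / t := by
    field_simp
    linear_combination hsL
  have hdown : L - (s + L - 1 / t) = s * (L - t) / t := by
    field_simp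
    linear_combination (-1 : ℝ) * hsL
  constructor
  · have : 0 < (t - s) * (L - t) / t := div_pos (mul_pos (by linarith) (by linarith)) ht0
    linarith
  · have : 0 < s * (L - t) / t := div_pos (mul_pos hs (by linarith)) ht0
    linarith

theorem riccati_orbit_strictMono_and_mem_Ioo {s L : ℝ} {σ : ℕ → ℝ} (hs : 0 < s) (hsL : s * L = 1)
    (hσ : ∀ n, σ (n + 1) = s + L - 1 / σ n) (h0 : σ 0 ∈ Set.Ioo s L) :
    StrictMono σ ∧ ∀ n, σ n ∈ Set.Ioo s L := by
  have hmem : ∀ n, σ n ∈ Set.Ioo s L := by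
    intro n
    induction n with
    | zero => exact h0
    | succ n ih =>
      obtain ⟨hgt, hlt⟩ := riccati_map_mem_Ioo hs hsL ih
      rw [hσ n]
      exact ⟨ih.1.trans hgt, hlt⟩
  exact ⟨strictMono_nat_of_lt_succ fun n => hσ n ▸ (riccati_map_mem_Ioo hs hsL (hmem n)).1, hmem⟩

theorem exists_riccati_roots {q₀ α x₀ : ℝ} (hq2 : q₀ < 1) (hα1 : 1 - q₀ < α) (hα2 : α < q₀)
    (hx : x₀ = 1 / (2 * Real.sqrt (q₀ * (1 - q₀)))) :
    ∃ s L : ℝ, 0 < s ∧ s * L = 1 ∧ s + L = 2 * x₀ ∧ 2 * x₀ * α ∈ Set.Ioo s L := by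
  have hq : 0 < q₀ * (1 - q₀) := mul_pos (by linarith) (by linarith)
  set r := Real.sqrt (q₀ * (1 - q₀))
  have hr : 0 < r := Real.sqrt_pos.2 hq
  have hr2 : r ^ 2 = q₀ * (1 - q₀) := Real.sq_sqrt hq.le
  have h2x : 2 * x₀ = 1 / r := by rw [hx]; field_simp
  refine ⟨(1 - q₀) / r, q₀ / r, div_pos (by linarith) hr, ?_, ?_, ?_⟩
  · field_simp; linarith
  · rw [h2x]; field_simp; ring
  · rw [h2x, one_div_mul_eq_div]
    exact ⟨div_lt_div_of_pos_right hα1 hr, div_lt_div_of_pos_right hα2 hr⟩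

theorem v_oscillation_dichotomy_general
    (q₀ α x₀ : ℝ) (hq2 : q₀ < 1)
    (hα1 : 1 - q₀ < α) (hα2 : α < q₀)
    (hx : x₀ = 1 / (2 * Real.sqrt (q₀ * (1 - q₀))))
    (σ : ℕ → ℝ)
    (hσ0 : σ 0 = 2 * x₀ * α) (hσ : ∀ n, σ (n + 1) = 2 * x₀ - 1 / σ n)
    (v : ℝ → ℕ → ℝ)
    (hv1 : ∀ x, v x 1 = 1)
    (hvr : ∀ x, ∀ n, 1 ≤ n →
      v x (n + 1) = (2 * x - σ (n + 1) + σ (n - 1)) * v x n - v x (n - 1)) :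
    (∀ x : ℝ, 1 < x →
      ∃ m : ℕ, (∀ n, m ≤ n → 0 < v x n) ∨ (∀ n, m ≤ n → v x n < 0)) ∧
    (∀ x : ℝ, x < 1 →
      ¬ ∃ m : ℕ, (∀ n, m ≤ n → 0 < v x n) ∨ (∀ n, m ≤ n → v x n < 0)) := by
  obtain ⟨s, L, hs, hsL, hsum, hα⟩ := exists_riccati_roots hq2 hα1 hα2 hx
  obtain ⟨hmono, hmem⟩ := riccati_orbit_strictMono_and_mem_Ioo hs hsL (hsum ▸ hσ) (hσ0 ▸ hα)
  have hsol : ∀ x, SolvesThreeTerm (fun n => 2 * x - (σ (n + 2) - σ n)) (v x) := fun x n => by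
    simpa [sub_add] using hvr x (n + 1) (by omega)
  have hgap_pos : ∀ n, 0 < σ (n + 2) - σ n := fun n => sub_pos.2 (hmono (by omega))
  have hgap_lim : Tendsto (fun n => σ (n + 2) - σ n) atTop (𝓝 0) := by
    have hlim := tendsto_atTop_ciSup hmono.monotone ⟨L, by rintro _ ⟨n, rfl⟩; exact (hmem n).2.le⟩
    simpa using (hlim.comp (tendsto_add_atTop_nat 2)).sub hlim
  refine ⟨fun x hx1 => ?_, fun x hx1 => ?_⟩
  · obtain ⟨m, hm⟩ := eventually_atTop.1 (hgap_lim.eventually (eventually_lt_nhds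
      (by linarith : (0 : ℝ) < 2 * (x - 1))))
    exact (hsol x).eventuallyConstSign (fun n hn => by linarith [hm n hn])
      (Or.inr (by simp [hv1]))
  · exact (hsol x).not_eventuallyConstSign (m := 0) (κ := 2 * x) (by linarith)
      fun n _ => by linarith [hgap_pos n]

/-- The sequence v_n(x) is nonoscillatory (eventually of constant sign) for
x > 1 and oscillatory for x < 1. -/
theorem v_oscillation_dichotomy
    (q₀ α x₀ : ℝ) (hq1 : 1 / 2 < q₀) (hq2 : q₀ < 1)
    (hα1 : 1 - q₀ < α) (hα2 : α < q₀)
    (hx : x₀ = 1 / (2 * Real.sqrt (q₀ * (1 - q₀))))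
    (σ : ℕ → ℝ)
    (hσ0 : σ 0 = 2 * x₀ * α) (hσ : ∀ n, σ (n + 1) = 2 * x₀ - 1 / σ n)
    (v : ℝ → ℕ → ℝ)
    (hv0 : ∀ x, v x 0 = 0) (hv1 : ∀ x, v x 1 = 1)
    (hvr : ∀ x, ∀ n, 1 ≤ n →
      v x (n + 1) = (2 * x - σ (n + 1) + σ (n - 1)) * v x n - v x (n - 1)) :
    (∀ x : ℝ, 1 < x →
      ∃ m : ℕ, (∀ n, m ≤ n → 0 < v x n) ∨ (∀ n, m ≤ n → v x n < 0)) ∧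
    (∀ x : ℝ, x < 1 →
      ¬ ∃ m : ℕ, (∀ n, m ≤ n → 0 < v x n) ∨ (∀ n, m ≤ n → v x n < 0)) :=
  v_oscillation_dichotomy_general q₀ α x₀ hq2 hα1 hα2 hx σ hσ0 hσ v hv1 hvr
end

section
/- With σ_n and v_n(x) defined as above (α < q₀ case), the set X = {x ∈ ℝ : v_n(x) > 0 for all n ≥ 1} is a closed infinite interval [x₊, ∞), and its infimum x₊ satisfies 1 ≤ x₊ < x₀, where x₀ = 1/(2√(q₀(1-q₀))). -/
open Filter Topology Set

/-!
The sequence `σ` increases from `σ 0` to `b = 1 / √γ > 1`, the attracting fixed point of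
`t ↦ 2 x₀ - 1 / t`. The positivity set is closed (a zero of `v x (n + 2)` forces
`v x (n + 3) < 0`), an upper set (the ratios `v x (n + 1) / v x n` increase with `x`), and bounded
below by `1` (for `x < 1` the ratios `R` satisfy `R (n + 1) ≤ 2 x - 1 / R n`, which drives them
negative). At `x₀` the recurrence factors and gives `v x₀ (n + 1) > v x₀ n / σ n`; once `σ n > 1`
this margin survives a small decrease of `x`, so a neighbourhood of `x₀` lies in the set.
-/

lemma IsUpperSet.eq_Ici_csInf {α : Type*} [ConditionallyCompleteLinearOrder α] [TopologicalSpace α]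
    [OrderTopology α] {S : Set α} (hup : IsUpperSet S) (hS : IsClosed S) (hne : S.Nonempty)
    (hbdd : BddBelow S) : S = Ici (sInf S) :=
  (hup.Ici_subset (hS.csInf_mem hne hbdd)).antisymm' fun _ hy => csInf_le hbdd hy

lemma one_le_of_riccati {R : ℕ → ℝ} {y : ℝ} (hR : ∀ n, 0 < R n)
    (hrec : ∀ n, R (n + 1) ≤ 2 * y - 1 / R n) : 1 ≤ y := by
  by_contra! hy
  set z := max y 0
  have hz1 : z < 1 := max_lt hy one_pos
  have hz0 : 0 ≤ z := le_max_right y 0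
  set δ := (1 - z ^ 2) / R 0
  have hδ : 0 < δ := div_pos (by nlinarith) (hR 0)
  -- with `z = max y 0 < 1`, every step lowers `R` by at least `(1 - z²) / R 0`
  have hstep : ∀ n, R (n + 1) ≤ R n - (1 - z ^ 2) / R n := by
    intro n
    have hRn := (hR n).ne'
    have hsq : (R n - (1 - z ^ 2) / R n) - (2 * z - 1 / R n) = (R n - z) ^ 2 / R n := by
      field_simp
      ring
    have := hrec n
    have := div_nonneg (sq_nonneg (R n - z)) (hR n).le
    linarith [le_max_left y 0]
  have hdesc : ∀ n : ℕ, R n ≤ R 0 - n * δ := by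
    intro n
    induction n with
    | zero => simp
    | succ n ih =>
      have hRn : R n ≤ R 0 := ih.trans (by nlinarith [n.cast_nonneg (α := ℝ)])
      have : δ ≤ (1 - z ^ 2) / R n := div_le_div_of_nonneg_left (by nlinarith) (hR n) hRn
      push_cast
      linarith [hstep n]
  obtain ⟨n, hn⟩ := exists_nat_gt (R 0 / δ)
  rw [div_lt_iff₀ hδ] at hn
  linarith [hdesc n, hR n]

lemma lt_mul_of_riccati_step {s σ m e p q : ℝ} (hs : 0 < s) (hsσ : s ≤ σ) (hm : 0 < m)
    (he : 2 * e ≤ s ^ 2 * m / (1 + s * m) - m) (hp : 0 ≤ p) (hpq : (1 / σ + m) * p < q) :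
    p < (σ - 2 * e - m) * q := by
  have hσ : 0 < σ := hs.trans_le hsσ
  have hq : 0 < q := lt_of_le_of_lt (mul_nonneg (by positivity) hp) hpq
  have hmono : s ^ 2 * m / (1 + s * m) ≤ σ ^ 2 * m / (1 + σ * m) := by
    rw [div_le_div_iff₀ (by positivity) (by positivity)]
    nlinarith [mul_nonneg (mul_nonneg hm.le (sub_nonneg.2 hsσ)) (add_pos hs hσ).le,
      mul_nonneg (mul_nonneg (mul_nonneg (sq_nonneg m) hs.le) hσ.le) (sub_nonneg.2 hsσ)]
  have hcoef : σ / (1 + σ * m) ≤ σ - 2 * e - m := by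
    have : σ - σ ^ 2 * m / (1 + σ * m) = σ / (1 + σ * m) := by
      field_simp
      ring
    linarith
  calc p = σ / (1 + σ * m) * ((1 / σ + m) * p) := by field_simp
    _ < σ / (1 + σ * m) * q := by gcongr
    _ ≤ (σ - 2 * e - m) * q := by gcongr

lemma add_sub_inv_mem_Ioo {a b t : ℝ} (ha : 0 < a) (hab : a * b = 1) (ht : t ∈ Ioo a b) :
    a + b - 1 / t ∈ Ioo t b := by
  obtain ⟨hat, htb⟩ := ht
  have ht0 : 0 < t := ha.trans hat
  have hinv : 1 / t * t = 1 := by field_simp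
  constructor <;> nlinarith [mul_pos ha ht0]

section MobiusIterates

variable {a b : ℝ} {σ : ℕ → ℝ}

lemma mem_Ioo_of_iterate (ha : 0 < a) (hab : a * b = 1) (h0 : σ 0 ∈ Ioo a b)
    (hσ : ∀ n, σ (n + 1) = a + b - 1 / σ n) (n : ℕ) : σ n ∈ Ioo a b := by
  induction n with
  | zero => exact h0
  | succ n ih =>
    rw [hσ]
    exact Ioo_subset_Ioo_left ih.1.le (add_sub_inv_mem_Ioo ha hab ih)

lemma strictMono_of_iterate (ha : 0 < a) (hab : a * b = 1) (h0 : σ 0 ∈ Ioo a b)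
    (hσ : ∀ n, σ (n + 1) = a + b - 1 / σ n) : StrictMono σ :=
  strictMono_nat_of_lt_succ fun n => by
    rw [hσ]
    exact (add_sub_inv_mem_Ioo ha hab (mem_Ioo_of_iterate ha hab h0 hσ n)).1

lemma tendsto_of_iterate (ha : 0 < a) (hab : a * b = 1) (h0 : σ 0 ∈ Ioo a b)
    (hσ : ∀ n, σ (n + 1) = a + b - 1 / σ n) : Tendsto σ atTop (𝓝 b) := by
  have hbdd : BddAbove (range σ) :=
    ⟨b, by rintro _ ⟨n, rfl⟩; exact (mem_Ioo_of_iterate ha hab h0 hσ n).2.le⟩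
  have hlim := tendsto_atTop_ciSup (strictMono_of_iterate ha hab h0 hσ).monotone hbdd
  set L := ⨆ n, σ n
  have haL : a < L := h0.1.trans_le (le_ciSup hbdd 0)
  have hfix : L = a + b - 1 / L := by
    refine tendsto_nhds_unique ((tendsto_add_atTop_iff_nat 1).2 hlim) ?_
    simp_rw [hσ]
    exact tendsto_const_nhds.sub (tendsto_const_nhds.div hlim (ha.trans haL).ne')
  have hroots : (L - a) * (L - b) = 0 := by
    have hL0 : L ≠ 0 := (ha.trans haL).ne'
    field_simp at hfix
    linear_combination hfix + hab
  rcases mul_eq_zero.1 hroots with h | h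
  · linarith
  · rwa [← sub_eq_zero.1 h]

end MobiusIterates

def positivitySet (v : ℝ → ℕ → ℝ) : Set ℝ := {x | ∀ n, 1 ≤ n → 0 < v x n}

lemma mem_positivitySet_iff {v : ℝ → ℕ → ℝ} {x : ℝ} :
    x ∈ positivitySet v ↔ ∀ n, 0 < v x (n + 1) := by
  refine ⟨fun h n => h (n + 1) n.succ_pos, fun h n hn => ?_⟩
  obtain ⟨k, rfl⟩ := Nat.exists_eq_add_of_le' hn
  exact h k

section ThreeTermRecurrence

variable {σ : ℕ → ℝ} {v : ℝ → ℕ → ℝ}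

lemma continuous_v (hv0 : ∀ x, v x 0 = 0) (hv1 : ∀ x, v x 1 = 1)
    (hrec : ∀ x n, v x (n + 2) = (2 * x - σ (n + 2) + σ n) * v x (n + 1) - v x n) (n : ℕ) :
    Continuous fun x => v x n := by
  induction n using Nat.twoStepInduction with
  | zero => simp_rw [hv0]; exact continuous_const
  | one => simp_rw [hv1]; exact continuous_const
  | more n ih0 ih1 => simp_rw [hrec]; fun_prop

lemma isUpperSet_positivitySet (hv0 : ∀ x, v x 0 = 0) (hv1 : ∀ x, v x 1 = 1)
    (hrec : ∀ x n, v x (n + 2) = (2 * x - σ (n + 2) + σ n) * v x (n + 1) - v x n) :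
    IsUpperSet (positivitySet v) := by
  intro x y hxy hx
  rw [mem_positivitySet_iff] at hx ⊢
  -- the ratio `v x (n + 2) / v x (n + 1)` is monotone in `x`
  have key : ∀ n, v x (n + 1) ≤ v y (n + 1) ∧
      v x (n + 2) * v y (n + 1) ≤ v y (n + 2) * v x (n + 1) := by
    intro n
    induction n with
    | zero =>
      simp only [zero_add, hrec _ 0, hv0, hv1]
      constructor <;> linarith
    | succ n ih =>
      obtain ⟨hle, hcross⟩ := ih
      have hle' : v x (n + 2) ≤ v y (n + 2) := by nlinarith [hx n, hx (n + 1)]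
      refine ⟨hle', ?_⟩
      rw [hrec x (n + 1), hrec y (n + 1)]
      nlinarith [mul_pos (hx (n + 1)) ((hx (n + 1)).trans_le hle')]
  exact fun n => (hx n).trans_le (key n).1

lemma one_le_of_mem_positivitySet
    (hrec : ∀ x n, v x (n + 2) = (2 * x - σ (n + 2) + σ n) * v x (n + 1) - v x n)
    (hmono : Monotone σ) {x : ℝ} (hx : x ∈ positivitySet v) : 1 ≤ x := by
  rw [mem_positivitySet_iff] at hx
  refine one_le_of_riccati (R := fun n => v x (n + 2) / v x (n + 1))
    (fun n => div_pos (hx _) (hx _)) fun n => ?_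
  rw [one_div_div, hrec x (n + 1), sub_div, mul_div_cancel_right₀ _ (hx (n + 1)).ne']
  linarith [hmono (show n + 1 ≤ n + 1 + 2 by omega)]

lemma positivitySet_eq_iInter (hv1 : ∀ x, v x 1 = 1)
    (hrec : ∀ x n, v x (n + 2) = (2 * x - σ (n + 2) + σ n) * v x (n + 1) - v x n) :
    positivitySet v = ⋂ n, {x | 0 ≤ v x (n + 1)} := by
  ext x
  simp only [mem_positivitySet_iff, mem_iInter, mem_ofPred_eq]
  refine ⟨fun h n => (h n).le, fun h n => ?_⟩
  induction n with
  | zero => simp [hv1]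
  | succ n ih =>
    -- if `v x (n + 2)` vanished, `v x (n + 3) = - v x (n + 1)` would be negative
    refine (h (n + 1)).lt_of_ne' fun h0 => ?_
    have := h (n + 2)
    rw [hrec x (n + 1), h0] at this
    linarith

lemma isClosed_positivitySet (hv0 : ∀ x, v x 0 = 0) (hv1 : ∀ x, v x 1 = 1)
    (hrec : ∀ x n, v x (n + 2) = (2 * x - σ (n + 2) + σ n) * v x (n + 1) - v x n) :
    IsClosed (positivitySet v) := by
  rw [positivitySet_eq_iInter hv1 hrec]
  exact isClosed_iInter fun n => isClosed_le continuous_const (continuous_v hv0 hv1 hrec _)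

end ThreeTermRecurrence

section AtCriticalPoint

variable {σ : ℕ → ℝ} {v : ℝ → ℕ → ℝ} {x₀ : ℝ}

lemma nonneg_and_div_lt_succ (hσpos : ∀ n, 0 < σ n) (hσ : ∀ n, σ (n + 1) = 2 * x₀ - 1 / σ n)
    (hv0 : ∀ x, v x 0 = 0) (hv1 : ∀ x, v x 1 = 1)
    (hrec : ∀ x n, v x (n + 2) = (2 * x - σ (n + 2) + σ n) * v x (n + 1) - v x n) (n : ℕ) :
    0 ≤ v x₀ n ∧ v x₀ n / σ n < v x₀ (n + 1) := by
  induction n with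
  | zero => simp [hv0, hv1]
  | succ n ih =>
    obtain ⟨hn, hlt⟩ := ih
    have hσn := (hσpos n).ne'
    have hσn1 := (hσpos (n + 1)).ne'
    have hfac : v x₀ (n + 2) - v x₀ (n + 1) / σ (n + 1) =
        σ n * (v x₀ (n + 1) - v x₀ n / σ n) := by
      rw [hrec, hσ (n + 1)]
      field_simp
      ring
    refine ⟨(div_nonneg hn (hσpos n).le).trans hlt.le, ?_⟩
    linarith [mul_pos (hσpos n) (sub_pos.2 hlt)]

lemma riccati_invariant_of_le (hσpos : ∀ n, 0 < σ n) (hmono : Monotone σ)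
    (hσ : ∀ n, σ (n + 1) = 2 * x₀ - 1 / σ n)
    (hrec : ∀ x n, v x (n + 2) = (2 * x - σ (n + 2) + σ n) * v x (n + 1) - v x n)
    {x m : ℝ} {N : ℕ} (hm : 0 < m)
    (he : 2 * (x₀ - x) ≤ σ (N + 1) ^ 2 * m / (1 + σ (N + 1) * m) - m)
    (hN : 0 < v x (N + 1) ∧ (1 / σ (N + 1) + m) * v x (N + 1) < v x (N + 2)) :
    ∀ n ≥ N, 0 < v x (n + 1) ∧ (1 / σ (n + 1) + m) * v x (n + 1) < v x (n + 2) := by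
  intro n hn
  induction n, hn using Nat.le_induction with
  | base => exact hN
  | succ n hn ih =>
    obtain ⟨hp, hpq⟩ := ih
    have hq : 0 < v x (n + 2) :=
      lt_of_le_of_lt (mul_nonneg (add_pos (one_div_pos.2 (hσpos _)) hm).le hp.le) hpq
    have hstep := lt_mul_of_riccati_step (hσpos (N + 1)) (hmono (by omega)) hm he hp.le hpq
    refine ⟨hq, ?_⟩
    rw [hrec x (n + 1), hσ (n + 2)]
    linarith

lemma positivitySet_mem_nhds (hσpos : ∀ n, 0 < σ n) (hmono : Monotone σ)
    (hσ : ∀ n, σ (n + 1) = 2 * x₀ - 1 / σ n) (hv0 : ∀ x, v x 0 = 0) (hv1 : ∀ x, v x 1 = 1)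
    (hrec : ∀ x n, v x (n + 2) = (2 * x - σ (n + 2) + σ n) * v x (n + 1) - v x n)
    {N : ℕ} (hN : 1 < σ (N + 1)) : positivitySet v ∈ 𝓝 x₀ := by
  -- Continuity handles `v x 1, …, v x (N + 1)`; from `N + 1` on, where `σ ≥ σ (N + 1) > 1`,
  -- the invariant of `riccati_invariant_of_le` propagates once `x` is close enough to `x₀`.
  have hx₀ := nonneg_and_div_lt_succ hσpos hσ hv0 hv1 hrec
  have hcont := continuous_v hv0 hv1 hrec
  set s := σ (N + 1)
  obtain ⟨hvN, hgap⟩ := hx₀ (N + 1)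
  obtain ⟨m₁, hm₁, hm₁v⟩ := exists_pos_mul_lt (sub_pos.2 hgap) (v x₀ (N + 1))
  set m := min m₁ ((s ^ 2 - 1) / (2 * s))
  have hm : 0 < m := lt_min hm₁ (div_pos (by nlinarith) (by positivity))
  have hmv : v x₀ (N + 1) * m < v x₀ (N + 2) - v x₀ (N + 1) / s :=
    (mul_le_mul_of_nonneg_left (min_le_left _ _) hvN).trans_lt hm₁v
  have hsm : s * m < s ^ 2 - 1 := by
    have : s * m ≤ s * ((s ^ 2 - 1) / (2 * s)) :=
      mul_le_mul_of_nonneg_left (min_le_right _ _) (by positivity)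
    rw [mul_div_assoc', mul_comm 2 s, mul_div_mul_left _ _ (by positivity)] at this
    nlinarith
  have hg : 0 < s ^ 2 * m / (1 + s * m) - m := by
    rw [sub_pos, lt_div_iff₀ (by positivity)]
    nlinarith
  have hev : ∀ᶠ x in 𝓝 x₀, (∀ k ∈ Finset.range (N + 1), 0 < v x (k + 1)) ∧
      (1 / s + m) * v x (N + 1) < v x (N + 2) ∧
      2 * (x₀ - x) < s ^ 2 * m / (1 + s * m) - m := by
    refine ((Finset.range (N + 1)).eventually_all.2 fun k _ => ?_).and (Eventually.and ?_ ?_)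
    · exact continuousAt_const.eventually_lt (hcont _).continuousAt
        ((div_nonneg (hx₀ k).1 (hσpos k).le).trans_lt (hx₀ k).2)
    · refine (continuousAt_const.mul (hcont _).continuousAt).eventually_lt
        (hcont _).continuousAt ?_
      show (1 / s + m) * v x₀ (N + 1) < v x₀ (N + 2)
      rw [add_mul, one_div_mul_eq_div]
      linarith
    · exact ContinuousAt.eventually_lt (by fun_prop) continuousAt_const (by simpa using hg)
  filter_upwards [hev] with x ⟨hfin, hgapx, he⟩
  rw [mem_positivitySet_iff]
  intro n
  rcases lt_or_ge n (N + 1) with h | h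
  · exact hfin n (Finset.mem_range.2 h)
  · exact (riccati_invariant_of_le hσpos hmono hσ hrec hm he.le
      ⟨hfin N (by simp), hgapx⟩ n (by omega)).1

end AtCriticalPoint

-- `a = √γ` and `b = 1 / √γ`, where `γ = (1 - q₀) / q₀`, are the fixed points of `t ↦ 2 x₀ - 1 / t`.
lemma exists_fixedPoints_bracketing {q₀ α x₀ : ℝ} (hq1 : 1 / 2 < q₀) (hq2 : q₀ < 1)
    (hα1 : 1 - q₀ < α) (hα2 : α < q₀) (hx : x₀ = 1 / (2 * √(q₀ * (1 - q₀)))) :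
    ∃ a b : ℝ, 0 < a ∧ 1 < b ∧ a * b = 1 ∧ a + b = 2 * x₀ ∧ 2 * x₀ * α ∈ Ioo a b := by
  set r := √(q₀ * (1 - q₀))
  have hr : 0 < r := Real.sqrt_pos.2 (by nlinarith)
  have hr2 : r ^ 2 = q₀ * (1 - q₀) := Real.sq_sqrt (by nlinarith)
  have h2x : 2 * x₀ = 1 / r := by rw [hx]; ring
  refine ⟨(1 - q₀) / r, q₀ / r, by bound, ?_, ?_, ?_, ?_, ?_⟩
  · rw [one_lt_div hr]
    nlinarith
  · rw [div_mul_div_comm, ← sq, hr2, mul_comm, div_self (by nlinarith)]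
  · rw [h2x]
    field_simp
    ring
  · rw [h2x, one_div_mul_eq_div]
    exact div_lt_div_of_pos_right (by linarith) hr
  · rw [h2x, one_div_mul_eq_div]
    exact div_lt_div_of_pos_right hα2 hr

/-- The set of x for which v_n(x) > 0 for all n ≥ 1 is a closed half-line
[x₊, ∞) with 1 ≤ x₊ < x₀. -/
theorem positivity_set_is_closed_halfline
    (q₀ α x₀ : ℝ) (hq1 : 1 / 2 < q₀) (hq2 : q₀ < 1)
    (hα1 : 1 - q₀ < α) (hα2 : α < q₀)
    (hx : x₀ = 1 / (2 * Real.sqrt (q₀ * (1 - q₀))))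
    (σ : ℕ → ℝ)
    (hσ0 : σ 0 = 2 * x₀ * α) (hσ : ∀ n, σ (n + 1) = 2 * x₀ - 1 / σ n)
    (v : ℝ → ℕ → ℝ)
    (hv0 : ∀ x, v x 0 = 0) (hv1 : ∀ x, v x 1 = 1)
    (hvr : ∀ x, ∀ n, 1 ≤ n →
      v x (n + 1) = (2 * x - σ (n + 1) + σ (n - 1)) * v x n - v x (n - 1)) :
    ∃ xs : ℝ, {x : ℝ | ∀ n, 1 ≤ n → 0 < v x n} = Set.Ici xs ∧
      1 ≤ xs ∧ xs < x₀ := by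
  obtain ⟨a, b, ha, hb, hab, hsum, hσ0ab⟩ := exists_fixedPoints_bracketing hq1 hq2 hα1 hα2 hx
  rw [← hσ0] at hσ0ab
  have hσ' : ∀ n, σ (n + 1) = a + b - 1 / σ n := hsum ▸ hσ
  have hσpos n : 0 < σ n := ha.trans (mem_Ioo_of_iterate ha hab hσ0ab hσ' n).1
  have hmono := (strictMono_of_iterate ha hab hσ0ab hσ').monotone
  have hrec x n : v x (n + 2) = (2 * x - σ (n + 2) + σ n) * v x (n + 1) - v x n :=
    hvr x (n + 1) n.succ_pos
  obtain ⟨N, hN⟩ :=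
    ((tendsto_of_iterate ha hab hσ0ab hσ').eventually (lt_mem_nhds hb)).exists_forall_of_atTop
  have hnhds := positivitySet_mem_nhds hσpos hmono hσ hv0 hv1 hrec (hN (N + 1) N.le_succ)
  have hlb : ∀ x ∈ positivitySet v, 1 ≤ x := fun x hx => one_le_of_mem_positivitySet hrec hmono hx
  have hne : (positivitySet v).Nonempty := ⟨x₀, mem_of_mem_nhds hnhds⟩
  obtain ⟨x, hxlt, hxmem⟩ := Filter.Eventually.exists_lt hnhds
  refine ⟨sInf (positivitySet v), ?_, le_csInf hne hlb, (csInf_le ⟨1, hlb⟩ hxmem).trans_lt hxlt⟩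
  exact (isUpperSet_positivitySet hv0 hv1 hrec).eq_Ici_csInf
    (isClosed_positivitySet hv0 hv1 hrec) hne ⟨1, hlb⟩
end

section
/- Define ζ(x) = x - √(x² - 1) for x ≥ 1, and with σ_n, v_n(x) as above, let f_n(x) = Σ_{k=1}^{n} (σ_{k+1} - σ_{k-1})·v_k(x)·ζ(x)^k. Then for every x ≥ 1 the limit f(x) = lim_{n→∞} f_n(x) exists and is finite; moreover, if (v_n(x)) is eventually positive then f(x) ≤ 1, and if eventually negative then f(x) ≥ 1. -/
/-!
The iteration `t ↦ 2x₀ - 1/t` has the repelling fixed point `2x₀(1 - q₀)` and the attracting one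
`s = 2x₀q₀`, and `σ₀` lies between them, so `σₙ` increases to `s` with `s - σₙ ≤ C rⁿ`,
`r = (1 - q₀)/α`. Hence `εₖ = σₖ₊₁ - σₖ₋₁ ≥ 0` and `∑ k εₖ < ∞`.
Since `ζ² + 1 = 2xζ`, the rescaled sequence `uₙ = vₙ ζⁿ` satisfies
`uₙ₊₂ - uₙ₊₁ = ζ² (uₙ₊₁ - uₙ) - εₙ₊₁ ζ uₙ₊₁`, a perturbation of a recurrence with linearly growing
solutions; a discrete Gronwall argument gives `|uₙ| ≤ n exp (∑ k εₖ)`, so `∑ εₖ uₖ` converges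
absolutely. Finally `ζ (1 - fₙ) = uₙ₊₁ - ζ² uₙ`: if `uₙ ≥ 0` eventually but the limit exceeds `1`,
then `uₙ` eventually drops by a fixed amount at each step, which is absurd.
-/

open Filter Topology Finset

theorem sub_sqrt_sq_sub_one_pos {x : ℝ} (hx : 1 ≤ x) : 0 < x - √(x ^ 2 - 1) := by
  have : √(x ^ 2 - 1) < x := (Real.sqrt_lt' (by linarith)).2 (by linarith)
  linarith

theorem sub_sqrt_sq_sub_one_le_one {x : ℝ} (hx : 1 ≤ x) : x - √(x ^ 2 - 1) ≤ 1 := by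
  have : x - 1 ≤ √(x ^ 2 - 1) := Real.le_sqrt_of_sq_le (by nlinarith)
  linarith

theorem sub_sqrt_sq_sub_one_sq_add_one {x : ℝ} (hx : 1 ≤ x ^ 2) :
    (x - √(x ^ 2 - 1)) ^ 2 + 1 = 2 * x * (x - √(x ^ 2 - 1)) := by
  linear_combination Real.sq_sqrt (sub_nonneg.2 hx)

section Mobius

variable {s : ℝ} {σ : ℕ → ℝ}

theorem lt_add_inv_sub_inv {t : ℝ} (hs : 0 < s) (hlo : s⁻¹ < t) (hhi : t < s) :
    t < s + s⁻¹ - t⁻¹ ∧ s + s⁻¹ - t⁻¹ < s := by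
  have ht : 0 < t := (inv_pos.2 hs).trans hlo
  have hst : 1 < s * t := by rwa [inv_lt_iff_one_lt_mul₀' hs] at hlo
  refine ⟨?_, by linarith [inv_strictAnti₀ ht hhi]⟩
  have : s + s⁻¹ - t⁻¹ - t = (s - t) * (s * t - 1) / (s * t) := by field_simp; ring
  have : 0 < (s - t) * (s * t - 1) / (s * t) := by
    apply div_pos (mul_pos _ _) (mul_pos hs ht) <;> linarith
  linarith

variable (hs : 0 < s) (hσ : ∀ n, σ (n + 1) = s + s⁻¹ - (σ n)⁻¹) (hlo : s⁻¹ < σ 0) (hhi : σ 0 < s)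
include hs hσ hlo hhi

theorem iterate_mem_Ioo (n : ℕ) : σ n ∈ Set.Ioo s⁻¹ s := by
  induction n with
  | zero => exact ⟨hlo, hhi⟩
  | succ n ih =>
    obtain ⟨hgt, hlt⟩ := lt_add_inv_sub_inv hs ih.1 ih.2
    rw [hσ n]
    exact ⟨ih.1.trans hgt, hlt⟩

theorem iterate_strictMono : StrictMono σ :=
  strictMono_nat_of_lt_succ fun n => by
    have h := iterate_mem_Ioo hs hσ hlo hhi n
    rw [hσ n]
    exact (lt_add_inv_sub_inv hs h.1 h.2).1

theorem sub_iterate_le (n : ℕ) : s - σ n ≤ (s - σ 0) * (s * σ 0)⁻¹ ^ n := by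
  induction n with
  | zero => simp
  | succ n ih =>
    have hσ0 : 0 < σ 0 := (inv_pos.2 hs).trans hlo
    have hmono : σ 0 ≤ σ n := (iterate_strictMono hs hσ hlo hhi).monotone (Nat.zero_le n)
    have hσn : 0 < σ n := hσ0.trans_le hmono
    have hgap : 0 ≤ s - σ n := (sub_pos.2 (iterate_mem_Ioo hs hσ hlo hhi n).2).le
    have hstep : s - σ (n + 1) = (s - σ n) * (s * σ n)⁻¹ := by
      rw [hσ n]; field_simp; ring
    calc s - σ (n + 1) = (s - σ n) * (s * σ n)⁻¹ := hstep
      _ ≤ (s - σ n) * (s * σ 0)⁻¹ := by gcongr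
      _ ≤ (s - σ 0) * (s * σ 0)⁻¹ ^ n * (s * σ 0)⁻¹ := by gcongr
      _ = (s - σ 0) * (s * σ 0)⁻¹ ^ (n + 1) := by ring

theorem summable_natCast_mul_iterate_sub :
    Summable fun k : ℕ => (k : ℝ) * (σ (k + 1) - σ (k - 1)) := by
  set r := (s * σ 0)⁻¹
  have hσ0 : 0 < σ 0 := (inv_pos.2 hs).trans hlo
  have hr0 : 0 < r := by positivity
  have hr1 : r < 1 := inv_lt_one_of_one_lt₀ (by rwa [inv_lt_iff_one_lt_mul₀' hs] at hlo)
  have hmono := iterate_strictMono hs hσ hlo hhi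
  have hε : ∀ k, 0 ≤ σ (k + 1) - σ (k - 1) := fun k => sub_nonneg.2 (hmono.monotone (by omega))
  have hbound : ∀ k, σ (k + 1) - σ (k - 1) ≤ (s - σ 0) / r * r ^ k := by
    intro k
    have hlt := (iterate_mem_Ioo hs hσ hlo hhi (k + 1)).2
    cases k with
    | zero =>
      have : s - σ 0 ≤ (s - σ 0) / r := le_div_self (by linarith) hr0 hr1.le
      simp only [pow_zero, mul_one]
      linarith
    | succ m =>
      have := sub_iterate_le hs hσ hlo hhi m
      have : (s - σ 0) / r * r ^ (m + 1) = (s - σ 0) * r ^ m := by field_simp; ring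
      simp only [Nat.add_sub_cancel]
      linarith
  have hgeom : Summable fun k : ℕ => (s - σ 0) / r * ((k : ℝ) * r ^ k) := by
    have hr : ‖r‖ < 1 := by rwa [Real.norm_eq_abs, abs_of_pos hr0]
    simpa only [pow_one] using
      (summable_pow_mul_geometric_of_norm_lt_one 1 hr).mul_left ((s - σ 0) / r)
  refine hgeom.of_nonneg_of_le (fun k => mul_nonneg k.cast_nonneg (hε k)) fun k => ?_
  calc (k : ℝ) * (σ (k + 1) - σ (k - 1)) ≤ k * ((s - σ 0) / r * r ^ k) := by
        gcongr; exact hbound k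
    _ = (s - σ 0) / r * (k * r ^ k) := by ring

end Mobius

section Gronwall

variable {u ε : ℕ → ℝ}

theorem abs_le_mul_exp_of_abs_sub_le (hε : ∀ k, 0 ≤ ε k) (hu0 : u 0 = 0) (hu1 : |u 1| ≤ 1)
    (hstep : ∀ n, |u (n + 2) - u (n + 1)| ≤ |u (n + 1) - u n| + ε (n + 1) * |u (n + 1)|)
    (n : ℕ) : |u n| ≤ n * Real.exp (∑ k ∈ range (n + 1), k * ε k) := by
  set S : ℕ → ℝ := fun n => ∑ k ∈ range (n + 1), k * ε k
  have hS : ∀ n, S (n + 1) = S n + (n + 1) * ε (n + 1) := fun n => by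
    simp only [S, sum_range_succ _ (n + 1)]; push_cast; ring
  suffices key : ∀ n, |u n| ≤ n * Real.exp (S n) ∧ |u (n + 1) - u n| ≤ Real.exp (S n) from
    (key n).1
  intro n
  induction n with
  | zero => simpa [S, hu0] using hu1
  | succ n ih =>
    obtain ⟨hu, hd⟩ := ih
    have hεn := hε (n + 1)
    have hSle : Real.exp (S n) ≤ Real.exp (S (n + 1)) := by
      rw [hS]; gcongr; exact le_add_of_nonneg_right (by positivity)
    have hun : |u (n + 1)| ≤ (n + 1) * Real.exp (S n) := by
      linarith [abs_sub_abs_le_abs_sub (u (n + 1)) (u n)]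
    constructor
    · push_cast
      exact hun.trans (by gcongr)
    · calc |u (n + 2) - u (n + 1)| ≤ |u (n + 1) - u n| + ε (n + 1) * |u (n + 1)| := hstep n
        _ ≤ Real.exp (S n) + ε (n + 1) * ((n + 1) * Real.exp (S n)) := by gcongr
        _ = Real.exp (S n) * ((n + 1) * ε (n + 1) + 1) := by ring
        _ ≤ Real.exp (S n) * Real.exp ((n + 1) * ε (n + 1)) := by
          gcongr; exact Real.add_one_le_exp _
        _ = Real.exp (S (n + 1)) := by rw [hS, Real.exp_add]

theorem summable_mul_of_abs_sub_le (hε : ∀ k, 0 ≤ ε k) (hu0 : u 0 = 0) (hu1 : |u 1| ≤ 1)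
    (hstep : ∀ n, |u (n + 2) - u (n + 1)| ≤ |u (n + 1) - u n| + ε (n + 1) * |u (n + 1)|)
    (hsum : Summable fun k : ℕ => k * ε k) : Summable fun k => ε k * u k := by
  set B := ∑' k : ℕ, k * ε k
  have hB : ∀ n, |u n| ≤ n * Real.exp B := fun n =>
    (abs_le_mul_exp_of_abs_sub_le hε hu0 hu1 hstep n).trans <| by
      gcongr; exact hsum.sum_le_tsum _ fun k _ => mul_nonneg k.cast_nonneg (hε k)
  refine .of_norm_bounded (hsum.mul_right (Real.exp B)) fun k => ?_
  rw [Real.norm_eq_abs, abs_mul, abs_of_nonneg (hε k)]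
  calc ε k * |u k| ≤ ε k * (k * Real.exp B) := by gcongr; exacts [hε k, hB k]
    _ = k * ε k * Real.exp B := by ring

end Gronwall

section Recurrence

variable {x z : ℝ} {ε v : ℕ → ℝ}

theorem one_sub_sum_eq (hz : z ^ 2 + 1 = 2 * x * z) (hv0 : v 0 = 0) (hv1 : v 1 = 1)
    (hv : ∀ n, v (n + 2) = (2 * x - ε (n + 1)) * v (n + 1) - v n) (n : ℕ) :
    1 - ∑ k ∈ Icc 1 n, ε k * v k * z ^ k = v (n + 1) * z ^ n - v n * z ^ (n + 1) := by
  induction n with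
  | zero => simp [hv0, hv1]
  | succ n ih =>
    rw [sum_Icc_succ_top (by omega), hv n]
    linear_combination ih + v (n + 1) * z ^ n * hz

theorem rescaled_sub_eq (hz : z ^ 2 + 1 = 2 * x * z)
    (hv : ∀ n, v (n + 2) = (2 * x - ε (n + 1)) * v (n + 1) - v n) (n : ℕ) :
    v (n + 2) * z ^ (n + 2) - v (n + 1) * z ^ (n + 1) =
      z ^ 2 * (v (n + 1) * z ^ (n + 1) - v n * z ^ n) -
        ε (n + 1) * z * (v (n + 1) * z ^ (n + 1)) := by
  rw [hv n]
  linear_combination -(v (n + 1) * z ^ (n + 1)) * hz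

theorem summable_mul_rescaled (hz0 : 0 ≤ z) (hz1 : z ≤ 1) (hz : z ^ 2 + 1 = 2 * x * z)
    (hε : ∀ k, 0 ≤ ε k) (hsum : Summable fun k : ℕ => k * ε k) (hv0 : v 0 = 0) (hv1 : v 1 = 1)
    (hv : ∀ n, v (n + 2) = (2 * x - ε (n + 1)) * v (n + 1) - v n) :
    Summable fun k => ε k * v k * z ^ k := by
  have hstep (n : ℕ) : |v (n + 2) * z ^ (n + 2) - v (n + 1) * z ^ (n + 1)| ≤
      |v (n + 1) * z ^ (n + 1) - v n * z ^ n| + ε (n + 1) * |v (n + 1) * z ^ (n + 1)| := by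
    rw [rescaled_sub_eq hz hv n]
    refine (abs_sub _ _).trans (add_le_add ?_ ?_)
    · rw [abs_mul, abs_of_nonneg (by positivity)]
      exact mul_le_of_le_one_left (abs_nonneg _) (pow_le_one₀ hz0 hz1)
    · rw [abs_mul, abs_mul, abs_of_nonneg (hε _), abs_of_nonneg hz0]
      exact mul_le_mul_of_nonneg_right (mul_le_of_le_one_right (hε _) hz1) (abs_nonneg _)
  simpa only [mul_assoc] using
    summable_mul_of_abs_sub_le (u := fun k => v k * z ^ k) hε (by simp [hv0])
      (by simpa [hv1, abs_of_nonneg hz0] using hz1) hstep hsum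

end Recurrence

theorem tendsto_sum_Icc_one {M : Type*} [AddCommMonoid M] [TopologicalSpace M] {g : ℕ → M}
    {a : M} (hg0 : g 0 = 0) (hg : HasSum g a) :
    Tendsto (fun n => ∑ k ∈ Icc 1 n, g k) atTop (𝓝 a) := by
  refine (hg.tendsto_sum_nat.comp (tendsto_add_atTop_nat 1)).congr fun n => ?_
  rw [Function.comp_apply, range_eq_Ico, sum_eq_sum_Ico_succ_bot n.succ_pos, hg0, zero_add]
  rfl

theorem not_eventually_nonneg_of_le_add_neg {u : ℕ → ℝ} {c : ℝ} (hc : c < 0)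
    (hstep : ∀ᶠ n in atTop, u (n + 1) ≤ u n + c) : ¬∀ᶠ n in atTop, 0 ≤ u n := by
  intro hnonneg
  obtain ⟨N, hN⟩ := eventually_atTop.1 (hstep.and hnonneg)
  have hdrift (j : ℕ) : u (N + j) ≤ u N + j * c := by
    induction j with
    | zero => simp
    | succ j ih =>
      have := (hN (N + j) (by omega)).1
      rw [← add_assoc]
      push_cast
      linarith
  obtain ⟨j, hj⟩ := exists_nat_gt (u N / -c)
  have := (div_lt_iff₀ (neg_pos.2 hc)).1 hj
  linarith [hdrift j, (hN (N + j) (by omega)).2]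

theorem le_one_of_tendsto_of_eventually_nonneg {z L : ℝ} {u F : ℕ → ℝ} (hz0 : 0 < z)
    (hz1 : z ≤ 1) (hF : Tendsto F atTop (𝓝 L))
    (hu : ∀ n, u (n + 1) = z * (1 - F n) + z ^ 2 * u n) (hnonneg : ∀ᶠ n in atTop, 0 ≤ u n) :
    L ≤ 1 := by
  by_contra! hL
  refine not_eventually_nonneg_of_le_add_neg (c := z * ((1 - L) / 2))
    (mul_neg_of_pos_of_neg hz0 (by linarith)) ?_ hnonneg
  filter_upwards [hF.eventually (lt_mem_nhds (show (L + 1) / 2 < L by linarith)), hnonneg]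
    with n hFn hun
  have : z ^ 2 * u n ≤ u n := mul_le_of_le_one_left hun (pow_le_one₀ hz0.le hz1)
  rw [hu n]
  nlinarith

theorem sigma_exists_fixedPoint {q₀ α x₀ : ℝ} {σ : ℕ → ℝ} (hq2 : q₀ < 1) (hα1 : 1 - q₀ < α)
    (hα2 : α < q₀) (hx : x₀ = 1 / (2 * √(q₀ * (1 - q₀)))) (hσ0 : σ 0 = 2 * x₀ * α)
    (hσ : ∀ n, σ (n + 1) = 2 * x₀ - 1 / σ n) :
    ∃ s, 0 < s ∧ s⁻¹ < σ 0 ∧ σ 0 < s ∧ ∀ n, σ (n + 1) = s + s⁻¹ - (σ n)⁻¹ := by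
  have hq : 0 < q₀ * (1 - q₀) := mul_pos (by linarith) (by linarith)
  have hx₀ : 0 < x₀ := by rw [hx]; positivity
  have hs_inv : (2 * x₀ * q₀)⁻¹ = 2 * x₀ * (1 - q₀) := by
    refine inv_eq_of_mul_eq_one_right ?_
    rw [hx]; field_simp; rw [Real.sq_sqrt hq.le]
  refine ⟨2 * x₀ * q₀, mul_pos (by positivity) (by linarith), ?_, ?_, fun n => ?_⟩
  · rw [hs_inv, hσ0]; gcongr
  · rw [hσ0]; gcongr
  · rw [hσ n, hs_inv, one_div]; ring

theorem f_limit_exists_and_bounds_general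
    (q₀ α x₀ : ℝ) (hq2 : q₀ < 1)
    (hα1 : 1 - q₀ < α) (hα2 : α < q₀)
    (hx : x₀ = 1 / (2 * Real.sqrt (q₀ * (1 - q₀))))
    (σ : ℕ → ℝ)
    (hσ0 : σ 0 = 2 * x₀ * α) (hσ : ∀ n, σ (n + 1) = 2 * x₀ - 1 / σ n)
    (v : ℝ → ℕ → ℝ)
    (hv0 : ∀ x, v x 0 = 0) (hv1 : ∀ x, v x 1 = 1)
    (hvr : ∀ x, ∀ n, 1 ≤ n →
      v x (n + 1) = (2 * x - σ (n + 1) + σ (n - 1)) * v x n - v x (n - 1))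
    (ζ : ℝ → ℝ) (hζ : ∀ x, ζ x = x - Real.sqrt (x ^ 2 - 1))
    (f : ℝ → ℕ → ℝ)
    (hf : ∀ x n, f x n =
      ∑ k ∈ Finset.Icc 1 n, (σ (k + 1) - σ (k - 1)) * v x k * ζ x ^ k) :
    ∀ x : ℝ, 1 ≤ x → ∃ L : ℝ, Tendsto (f x) atTop (nhds L) ∧
      ((∃ m : ℕ, ∀ n, m ≤ n → 0 < v x n) → L ≤ 1) ∧
      ((∃ m : ℕ, ∀ n, m ≤ n → v x n < 0) → 1 ≤ L) := by
  intro x hx1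
  obtain ⟨s, hs, hlo, hhi, hσ'⟩ := sigma_exists_fixedPoint hq2 hα1 hα2 hx hσ0 hσ
  set ε : ℕ → ℝ := fun k => σ (k + 1) - σ (k - 1)
  have hε : ∀ k, 0 ≤ ε k := fun k =>
    sub_nonneg.2 ((iterate_strictMono hs hσ' hlo hhi).monotone (by omega))
  set z := ζ x
  have hz : z = x - √(x ^ 2 - 1) := hζ x
  have hz0 : 0 < z := hz ▸ sub_sqrt_sq_sub_one_pos hx1
  have hz1 : z ≤ 1 := hz ▸ sub_sqrt_sq_sub_one_le_one hx1
  have hz2 : z ^ 2 + 1 = 2 * x * z := hz ▸ sub_sqrt_sq_sub_one_sq_add_one (one_le_pow₀ hx1)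
  have hv : ∀ n, v x (n + 2) = (2 * x - ε (n + 1)) * v x (n + 1) - v x n := fun n => by
    rw [hvr x (n + 1) (by omega)]; simp only [ε, Nat.add_sub_cancel]; ring
  have hsum := summable_mul_rescaled hz0.le hz1 hz2 hε
    (summable_natCast_mul_iterate_sub hs hσ' hlo hhi) (hv0 x) (hv1 x) hv
  have hlim : Tendsto (f x) atTop (𝓝 (∑' k, ε k * v x k * z ^ k)) := by
    rw [funext (hf x)]
    exact tendsto_sum_Icc_one (by simp [hv0]) hsum.hasSum
  have hrec : ∀ n, v x (n + 1) * z ^ (n + 1) = z * (1 - f x n) + z ^ 2 * (v x n * z ^ n) :=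
    fun n => by rw [hf, one_sub_sum_eq hz2 (hv0 x) (hv1 x) hv]; ring
  refine ⟨_, hlim, fun ⟨m, hm⟩ => ?_, fun ⟨m, hm⟩ => ?_⟩
  · refine le_one_of_tendsto_of_eventually_nonneg (u := fun n => v x n * z ^ n) hz0 hz1 hlim
      hrec ?_
    filter_upwards [eventually_ge_atTop m] with n hn
    exact (mul_pos (hm n hn) (pow_pos hz0 n)).le
  · have := le_one_of_tendsto_of_eventually_nonneg (u := fun n => -(v x n * z ^ n)) hz0 hz1
      (tendsto_const_nhds.sub hlim) (F := fun n => 2 - f x n) (fun n => by rw [hrec]; ring) ?_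
    · linarith
    filter_upwards [eventually_ge_atTop m] with n hn
    exact neg_nonneg.2 (mul_neg_of_neg_of_pos (hm n hn) (pow_pos hz0 n)).le

/-- The limit f(x) of the partial sums f_n(x) exists for all x ≥ 1; it is ≤ 1
when v_n(x) is eventually positive and ≥ 1 when eventually negative. -/
theorem f_limit_exists_and_bounds
    (q₀ α x₀ : ℝ) (hq1 : 1 / 2 < q₀) (hq2 : q₀ < 1)
    (hα1 : 1 - q₀ < α) (hα2 : α < q₀)
    (hx : x₀ = 1 / (2 * Real.sqrt (q₀ * (1 - q₀))))
    (σ : ℕ → ℝ)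
    (hσ0 : σ 0 = 2 * x₀ * α) (hσ : ∀ n, σ (n + 1) = 2 * x₀ - 1 / σ n)
    (v : ℝ → ℕ → ℝ)
    (hv0 : ∀ x, v x 0 = 0) (hv1 : ∀ x, v x 1 = 1)
    (hvr : ∀ x, ∀ n, 1 ≤ n →
      v x (n + 1) = (2 * x - σ (n + 1) + σ (n - 1)) * v x n - v x (n - 1))
    (ζ : ℝ → ℝ) (hζ : ∀ x, ζ x = x - Real.sqrt (x ^ 2 - 1))
    (f : ℝ → ℕ → ℝ)
    (hf : ∀ x n, f x n =
      ∑ k ∈ Finset.Icc 1 n, (σ (k + 1) - σ (k - 1)) * v x k * ζ x ^ k) :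
    ∀ x : ℝ, 1 ≤ x → ∃ L : ℝ, Tendsto (f x) atTop (nhds L) ∧
      ((∃ m : ℕ, ∀ n, m ≤ n → 0 < v x n) → L ≤ 1) ∧
      ((∃ m : ℕ, ∀ n, m ≤ n → v x n < 0) → 1 ≤ L) :=
  f_limit_exists_and_bounds_general q₀ α x₀ hq2 hα1 hα2 hx σ hσ0 hσ v hv0 hv1 hvr ζ hζ f hf
end

section
/- Let B be the symmetric tridiagonal matrix with (Bu)_n = (1 - s_{n+1} + s_{n-1})u_n - √(q_n(1-q_{n+1}))u_{n+1} - √(q_{n-1}(1-q_n))u_{n-1} (u_0 = u_{N+1} = 0), in the pure TASEP case ω = 0 (so q_n = q₀ for all n), with s_n non-increasing (α ≥ q₀). Then the smallest eigenvalue μ satisfies μ ≤ 1 - 2√(q₀(1-q₀))·cos(π/(N+1)) + C/(N+1)³ for a constant C independent of N, and hence μ ≤ 1 - 2√(q₀(1-q₀)) + C'N^{-2}. -/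
/-!
Courant's principle bounds the smallest eigenvalue by the Rayleigh quotient of any test vector.
Take the discrete sine `u n = sin (π n / (N + 1))`, the lowest Dirichlet mode of the constant
tridiagonal part: since `u (n + 1) + u (n - 1) = 2 cos (π / (N + 1)) u n`, its Rayleigh quotient is
`1 - 2 √(q₀ (1 - q₀)) cos (π / (N + 1))` plus the diagonal correction
`∑ (s n - s (n + 2)) (u n)² / ∑ (u n)²`. The denominator is `(N + 1) / 2`, while
`s n - s (n + 2) = O(γⁿ)` and `(u n)² ≤ (π n / (N + 1))²`, so the correction is `O((N + 1)⁻³)`.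
The second bound follows from `cos x ≥ 1 - x² / 2`.
-/

open Finset Matrix Real

theorem Matrix.IsHermitian.iInf_eigenvalues_mul_dotProduct_self_le {n : Type*} [Fintype n]
    [DecidableEq n] {A : Matrix n n ℝ} (hA : A.IsHermitian) (v : n → ℝ) :
    (⨅ i, hA.eigenvalues i) * (v ⬝ᵥ v) ≤ v ⬝ᵥ (A *ᵥ v) := by
  set U : Matrix n n ℝ := (hA.eigenvectorUnitary : Matrix n n ℝ)
  set w : n → ℝ := star U *ᵥ v
  have hU : U * star U = 1 := Matrix.mem_unitaryGroup_iff.mp hA.eigenvectorUnitary.2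
  have hv : ∀ x : n → ℝ, v ⬝ᵥ (U *ᵥ x) = w ⬝ᵥ x := fun x => by
    simp [w, dotProduct_mulVec, star_eq_conjTranspose, ← mulVec_transpose]
  have hA_eq : A = U * diagonal hA.eigenvalues * star U := by
    conv_lhs => rw [hA.spectral_theorem, Unitary.conjStarAlgAut_apply]
    simp [U]
  have hquad : v ⬝ᵥ (A *ᵥ v) = ∑ k, hA.eigenvalues k * w k ^ 2 := by
    conv_lhs => rw [hA_eq, ← mulVec_mulVec, ← mulVec_mulVec, hv, dotProduct]
    exact sum_congr rfl fun k _ => by rw [mulVec_diagonal]; ring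
  have hnorm : w ⬝ᵥ w = v ⬝ᵥ v := by rw [← hv w, mulVec_mulVec, hU, one_mulVec]
  rw [hquad, ← hnorm, dotProduct, mul_sum]
  exact sum_le_sum fun k _ => by
    rw [← sq]
    exact mul_le_mul_of_nonneg_right (ciInf_le (Finite.bddBelow_range _) k) (sq_nonneg _)

theorem sum_fin_ite_val_eq {M : Type*} [AddCommMonoid M] (N k : ℕ) (c : M) :
    ∑ j : Fin N, (if (j : ℕ) = k then c else 0) = if k < N then c else 0 := by
  rw [Fin.sum_univ_eq_sum_range (fun j => if j = k then c else 0), sum_ite_eq']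
  simp

/-- `g 0` and `g (N + 1)` are the Dirichlet boundary values `u₀ = u_{N+1} = 0`. -/
theorem tridiagonal_mulVec_apply {N : ℕ} {B : Matrix (Fin N) (Fin N) ℝ} (hB : B.IsHermitian)
    {r : ℝ} (hsuper : ∀ i j : Fin N, (j : ℕ) = (i : ℕ) + 1 → B i j = -r)
    (hzero : ∀ i j : Fin N, ((i : ℕ) + 1 < (j : ℕ) ∨ (j : ℕ) + 1 < (i : ℕ)) → B i j = 0)
    {g : ℕ → ℝ} (hg0 : g 0 = 0) (hgN : g (N + 1) = 0) (i : Fin N) :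
    (B *ᵥ fun j => g ((j : ℕ) + 1)) i = B i i * g (i + 1) - r * (g (i + 2) + g i) := by
  have hsub : ∀ j : Fin N, (j : ℕ) + 1 = i → B i j = -r := fun j hj => by
    rw [← hB.apply i j, star_trivial, hsuper j i hj.symm]
  have hentry : ∀ j : Fin N, B i j * g (j + 1) = (if j = i then B i i * g (i + 1) else 0) +
      (if (j : ℕ) = i + 1 then -r * g (i + 2) else 0) +
      (if (j : ℕ) = i - 1 then -r * g i else 0) := fun j => by
    -- for `i = 0` the truncated `i - 1` is `0`, harmless since that term carries `g 0 = 0`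
    rcases eq_or_ne j i with rfl | hji
    · rcases Nat.eq_zero_or_pos (j : ℕ) with h0 | h0 <;> (simp [h0, hg0]; try omega)
    by_cases hup : (j : ℕ) = i + 1
    · simp [hji, hup, hsuper i j hup]; omega
    by_cases hlo : (j : ℕ) + 1 = i
    · simp [hji, hsub j hlo, show (j : ℕ) = i - 1 by omega,
        Nat.sub_add_cancel (show 1 ≤ (i : ℕ) by omega)]
    · simp [hji, hup, hzero i j (by omega), show (j : ℕ) ≠ i - 1 by omega]
  rw [mulVec, dotProduct, sum_congr rfl fun j _ => hentry j, sum_add_distrib, sum_add_distrib,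
    sum_ite_eq', sum_fin_ite_val_eq, sum_fin_ite_val_eq, if_pos (mem_univ i),
    if_pos (by omega : (i : ℕ) - 1 < N)]
  split_ifs
  · ring
  · rw [show (i : ℕ) + 2 = N + 1 by omega, hgN]; ring

noncomputable def sineMode (N n : ℕ) : ℝ := sin (π * n / (N + 1))

theorem sineMode_zero (N : ℕ) : sineMode N 0 = 0 := by simp [sineMode]

theorem sineMode_succ_self (N : ℕ) : sineMode N (N + 1) = 0 := by
  rw [sineMode, Nat.cast_succ, mul_div_cancel_right₀ _ (by positivity), sin_pi]

theorem sineMode_add_two_add (N n : ℕ) :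
    sineMode N (n + 2) + sineMode N n = 2 * cos (π / (N + 1)) * sineMode N (n + 1) := by
  set x := π * (n + 1 : ℕ) / (N + 1)
  set θ := π / (N + 1)
  have hadd : π * (n + 2 : ℕ) / (N + 1) = x + θ := by simp only [x, θ]; push_cast; ring
  have hsub : π * n / (N + 1) = x - θ := by simp only [x, θ]; push_cast; ring
  rw [sineMode, sineMode, sineMode, hadd, hsub, sin_add, sin_sub]
  ring

theorem sum_sineMode_sq {N : ℕ} (hN : 0 < N) :
    ∑ i ∈ range N, sineMode N (i + 1) ^ 2 = (N + 1) / 2 := by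
  set θ := π / (N + 1)
  have hsin : 0 < sin θ := sin_pos_of_pos_of_lt_pi (by positivity)
    (div_lt_self pi_pos (by norm_cast; omega))
  have hsum : ∑ i ∈ range N, cos (2 * θ * i + 2 * θ) = -1 := by
    have h := sin_mul_sum_cos N (2 * θ) (2 * θ)
    rw [show (N - 1) * (2 * θ) / 2 + 2 * θ = π by simp only [θ]; field_simp; ring,
      show N * (2 * θ) / 2 = π - θ by simp only [θ]; field_simp; ring,
      show 2 * θ / 2 = θ by ring, cos_pi, sin_pi_sub] at h
    exact mul_left_cancel₀ hsin.ne' (by linarith)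
  have hsq : ∀ i : ℕ, sineMode N (i + 1) ^ 2 = 1 / 2 - cos (2 * θ * i + 2 * θ) / 2 := fun i => by
    rw [sineMode, sin_sq_eq_half_sub]
    simp only [θ]
    push_cast
    ring_nf
  simp only [hsq, sum_sub_distrib, ← sum_div, hsum, sum_const, card_range]
  ring

theorem sineMode_sq_le (N n : ℕ) : sineMode N n ^ 2 ≤ (π / (N + 1)) ^ 2 * n ^ 2 := by
  calc sineMode N n ^ 2 ≤ (π * n / (N + 1)) ^ 2 := sin_sq_le_sq
    _ = (π / (N + 1)) ^ 2 * n ^ 2 := by ring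

theorem inv_one_sub_sub_inv_one_sub_le {a b β : ℝ} (hb : 0 ≤ b) (hba : b ≤ a) (haβ : a ≤ β)
    (hβ : β < 1) : (1 - a)⁻¹ - (1 - b)⁻¹ ≤ a / (1 - β) ^ 2 := by
  have h1a : 0 < 1 - a := by linarith
  have h1b : 0 < 1 - b := by linarith
  rw [inv_sub_inv h1a.ne' h1b.ne', show 1 - b - (1 - a) = a - b by ring, sq]
  apply div_le_div₀ (by linarith) (by linarith) (by nlinarith)
  exact mul_le_mul (by linarith) (by linarith) (by linarith) h1a.le

theorem exists_riccati_sub_le {q₀ α γ : ℝ} (hq1 : 1 / 2 < q₀) (hq2 : q₀ < 1)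
    (hγ : γ = (1 - q₀) / q₀) (hα : q₀ ≤ α) {s : ℕ → ℝ}
    (hs : ∀ n, s n = q₀ + (2 * q₀ - 1) *
      ((1 - γ ^ n * (α - q₀) / (α - (1 - q₀)))⁻¹ - 1)) :
    ∃ K, 0 ≤ K ∧ ∀ n, s n - s (n + 2) ≤ K * γ ^ n := by
  set β := (α - q₀) / (α - (1 - q₀))
  have hden : 0 < α - (1 - q₀) := by linarith
  have hβ0 : 0 ≤ β := div_nonneg (by linarith) hden.le
  have hβ1 : β < 1 := (div_lt_one hden).mpr (by linarith)
  have hγ0 : 0 ≤ γ := hγ ▸ div_nonneg (by linarith) (by linarith)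
  have hγ1 : γ ≤ 1 := hγ ▸ (div_le_one (by linarith)).mpr (by linarith)
  refine ⟨(2 * q₀ - 1) * β / (1 - β) ^ 2,
    div_nonneg (mul_nonneg (by linarith) hβ0) (sq_nonneg _), fun n => ?_⟩
  have hpow : ∀ m, γ ^ m * (α - q₀) / (α - (1 - q₀)) = γ ^ m * β := fun m => mul_div_assoc ..
  have hle : (1 - γ ^ n * β)⁻¹ - (1 - γ ^ (n + 2) * β)⁻¹ ≤ γ ^ n * β / (1 - β) ^ 2 :=
    inv_one_sub_sub_inv_one_sub_le (by positivity)
      (mul_le_mul_of_nonneg_right (pow_le_pow_of_le_one hγ0 hγ1 (by omega)) hβ0)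
      (mul_le_of_le_one_left hβ0 (pow_le_one₀ hγ0 hγ1)) hβ1
  calc s n - s (n + 2)
      = (2 * q₀ - 1) * ((1 - γ ^ n * β)⁻¹ - (1 - γ ^ (n + 2) * β)⁻¹) := by
        rw [hs, hs, hpow, hpow]; ring
    _ ≤ (2 * q₀ - 1) * (γ ^ n * β / (1 - β) ^ 2) :=
        mul_le_mul_of_nonneg_left hle (by linarith)
    _ = (2 * q₀ - 1) * β / (1 - β) ^ 2 * γ ^ n := by ring

theorem summable_succ_sq_mul_geometric {γ : ℝ} (hγ : ‖γ‖ < 1) :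
    Summable fun i : ℕ => ((i : ℝ) + 1) ^ 2 * γ ^ i := by
  have h2 := summable_pow_mul_geometric_of_norm_lt_one 2 hγ
  have h1 := summable_pow_mul_geometric_of_norm_lt_one 1 hγ
  have h0 := summable_geometric_of_norm_lt_one hγ
  exact ((h2.add (h1.mul_left 2)).add h0).congr fun i => by ring

theorem iInf_eigenvalues_le_of_tridiagonal {N : ℕ} (hN : 0 < N) {B : Matrix (Fin N) (Fin N) ℝ}
    (hB : B.IsHermitian) {c r K γ S : ℝ} (hK : 0 ≤ K) (hγ : 0 ≤ γ)
    (hdiag : ∀ i : Fin N, B i i ≤ c + K * γ ^ (i : ℕ))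
    (hsuper : ∀ i j : Fin N, (j : ℕ) = (i : ℕ) + 1 → B i j = -r)
    (hzero : ∀ i j : Fin N, ((i : ℕ) + 1 < (j : ℕ) ∨ (j : ℕ) + 1 < (i : ℕ)) → B i j = 0)
    (hS : ∑ i ∈ range N, ((i : ℝ) + 1) ^ 2 * γ ^ i ≤ S) :
    ⨅ i, hB.eigenvalues i ≤ c - 2 * r * cos (π / (N + 1)) + 2 * K * π ^ 2 * S / (N + 1) ^ 3 := by
  set M : ℝ := N + 1
  set μ₀ := c - 2 * r * cos (π / M)
  set v : Fin N → ℝ := fun i => sineMode N (i + 1)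
  have hvv : v ⬝ᵥ v = M / 2 := by
    rw [← sum_sineMode_sq hN, dotProduct,
      ← Fin.sum_univ_eq_sum_range (fun i => sineMode N (i + 1) ^ 2)]
    exact sum_congr rfl fun i _ => (sq _).symm
  have hBv : ∀ i, (B *ᵥ v) i = (B i i - 2 * r * cos (π / M)) * v i := fun i => by
    rw [tridiagonal_mulVec_apply hB hsuper hzero (sineMode_zero N) (sineMode_succ_self N),
      sineMode_add_two_add]
    ring
  have hterm : ∀ i : Fin N, v i * (B *ᵥ v) i ≤
      μ₀ * (v i * v i) + K * (π / M) ^ 2 * (((i : ℕ) + 1) ^ 2 * γ ^ (i : ℕ)) := fun i => by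
    have hvi : v i ^ 2 ≤ (π / M) ^ 2 * ((i : ℕ) + 1 : ℕ) ^ 2 := sineMode_sq_le N (i + 1)
    push_cast at hvi
    rw [hBv]
    nlinarith [hdiag i, mul_le_mul_of_nonneg_left hvi (by positivity : 0 ≤ K * γ ^ (i : ℕ)),
      sq_nonneg (v i)]
  have hquad : v ⬝ᵥ (B *ᵥ v) ≤ μ₀ * (M / 2) + K * (π / M) ^ 2 * S := by
    calc v ⬝ᵥ (B *ᵥ v)
        ≤ ∑ i : Fin N, (μ₀ * (v i * v i) + K * (π / M) ^ 2 * (((i : ℕ) + 1) ^ 2 * γ ^ (i : ℕ))) :=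
          sum_le_sum fun i _ => hterm i
      _ = μ₀ * (v ⬝ᵥ v) + K * (π / M) ^ 2 * ∑ i ∈ range N, ((i : ℝ) + 1) ^ 2 * γ ^ i := by
          rw [sum_add_distrib, ← mul_sum, ← mul_sum, dotProduct,
            Fin.sum_univ_eq_sum_range (fun i => ((i : ℝ) + 1) ^ 2 * γ ^ i)]
      _ ≤ μ₀ * (M / 2) + K * (π / M) ^ 2 * S := by
          rw [hvv]; gcongr
  have hray := hB.iInf_eigenvalues_mul_dotProduct_self_le v
  rw [hvv] at hray
  have hcoef : 2 * K * π ^ 2 * S / M ^ 3 = K * (π / M) ^ 2 * S / (M / 2) := by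
    field_simp
  rw [hcoef, ← sub_le_iff_le_add', le_div_iff₀ (by positivity)]
  linarith

theorem sub_two_mul_cos_pi_div_add_le (c : ℝ) {r C : ℝ} (hr : 0 ≤ r) (hC : 0 ≤ C) {N : ℕ}
    (hN : 0 < N) :
    c - 2 * r * cos (π / (N + 1)) + C / ((N : ℝ) + 1) ^ 3 ≤
      c - 2 * r + (r * π ^ 2 + C) / (N : ℝ) ^ 2 := by
  have hN1 : (1 : ℝ) ≤ N := by exact_mod_cast hN
  have hcos : 1 - (π / (N + 1)) ^ 2 / 2 ≤ cos (π / (N + 1)) := one_sub_sq_div_two_le_cos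
  have hsq : π ^ 2 / ((N : ℝ) + 1) ^ 2 ≤ π ^ 2 / (N : ℝ) ^ 2 := by gcongr; linarith
  have hcube : C / ((N : ℝ) + 1) ^ 3 ≤ C / (N : ℝ) ^ 2 := by
    gcongr
    calc (N : ℝ) ^ 2 ≤ ((N : ℝ) + 1) ^ 2 := by gcongr; linarith
      _ ≤ ((N : ℝ) + 1) ^ 3 := pow_le_pow_right₀ (by linarith) (by norm_num)
  rw [div_pow] at hcos
  rw [add_div, mul_div_assoc]
  nlinarith [mul_le_mul_of_nonneg_left hcos hr, mul_le_mul_of_nonneg_left hsq hr]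

/-- Courant upper bound for the smallest eigenvalue of the pure-TASEP
simplified relaxation matrix (ω = 0, α ≥ q₀). -/
theorem courant_upper_bound_pure_tasep
    (q₀ α γ : ℝ) (hq1 : 1 / 2 < q₀) (hq2 : q₀ < 1)
    (hγ : γ = (1 - q₀) / q₀) (hα : q₀ ≤ α)
    (s : ℕ → ℝ)
    (hs : ∀ n, s n = q₀ + (2 * q₀ - 1) *
      ((1 - γ ^ n * (α - q₀) / (α - (1 - q₀)))⁻¹ - 1)) :
    ∃ C > (0 : ℝ), ∃ C' > (0 : ℝ), ∀ N : ℕ, 0 < N →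
      ∀ B : Matrix (Fin N) (Fin N) ℝ, ∀ hB : B.IsHermitian,
      (∀ i : Fin N, B i i = 1 - s ((i : ℕ) + 2) + s (i : ℕ)) →
      (∀ i j : Fin N, (j : ℕ) = (i : ℕ) + 1 →
        B i j = -Real.sqrt (q₀ * (1 - q₀))) →
      (∀ i j : Fin N, ((i : ℕ) + 1 < (j : ℕ) ∨ (j : ℕ) + 1 < (i : ℕ)) →
        B i j = 0) →
      (⨅ i, hB.eigenvalues i) ≤
          1 - 2 * Real.sqrt (q₀ * (1 - q₀)) * Real.cos (Real.pi / (N + 1))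
            + C / ((N : ℝ) + 1) ^ 3 ∧
      (⨅ i, hB.eigenvalues i) ≤
          1 - 2 * Real.sqrt (q₀ * (1 - q₀)) + C' / (N : ℝ) ^ 2 := by
  obtain ⟨K, hK, hgap⟩ := exists_riccati_sub_le hq1 hq2 hγ hα hs
  have hγ0 : 0 ≤ γ := hγ ▸ div_nonneg (by linarith) (by linarith)
  have hγ1 : ‖γ‖ < 1 := by
    rw [norm_of_nonneg hγ0, hγ, div_lt_one (by linarith)]
    linarith
  set S := ∑' i : ℕ, ((i : ℝ) + 1) ^ 2 * γ ^ i
  have hS0 : 0 ≤ S := tsum_nonneg fun i => by positivity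
  set C := 2 * K * π ^ 2 * S + 1
  have hC : 0 < C := by positivity
  refine ⟨C, hC, √(q₀ * (1 - q₀)) * π ^ 2 + C, by positivity,
    fun N hN B hB hdiag hsuper hzero => ?_⟩
  have hcourant := iInf_eigenvalues_le_of_tridiagonal (c := 1) hN hB hK hγ0
    (fun i => by rw [hdiag]; linarith [hgap i]) hsuper hzero
    ((summable_succ_sq_mul_geometric hγ1).sum_le_tsum _ fun i _ => by positivity)
  have hfirst : ⨅ i, hB.eigenvalues i ≤
      1 - 2 * √(q₀ * (1 - q₀)) * cos (π / (N + 1)) + C / ((N : ℝ) + 1) ^ 3 := by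
    refine hcourant.trans ?_
    gcongr
    linarith
  exact ⟨hfirst, hfirst.trans
    (sub_two_mul_cos_pi_div_add_le 1 (Real.sqrt_nonneg _) hC.le hN)⟩
end
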